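/- arXiv:1105.2061 — 6 statements merged into one kernel-verified Lean document; each statement's English description precedes it below -/
import Mathlib

section
/- Assume: (i) there is a constant C₁ > 0 such that for every q ∈ Q, sup over v ∈ X₂ \ {0} of b(v, q)/‖v‖_{X₂} ≥ C₁ ‖q‖_Q; (ii) letting K := {v ∈ X₂ : b(v, q) = 0 for all q ∈ Q}, there is a constant C₂ > 0 such that for every v ∈ K, sup over ξ ∈ X₁ \ {0} of b₁(ξ, v)/‖ξ‖_{X₁} ≥ C₂ ‖v‖_{X₂}; (iii) there is a constant C₃ > 0 such that a(ξ, ξ) ≥ C₃ ‖ξ‖²_{X₁} for all ξ ∈ X₁. Then for every continuous linear functional F on Q the dual-dual (expanded) mixed problem has a unique solution (θ, u, p) ∈ X₁ × X₂ × Q, and there exists a constant C > 0, depending only on C₁, C₂, C₃ and the norms of the bilinear forms a, b₁, b, such that ‖θ‖_{X₁} + ‖u‖_{X₂} + ‖p‖_Q ≤ C ‖F‖_{Q'}. -/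
/-!
Write `B' q ∈ X₂` for the Riesz representative of `b (·) q`. By (i) the form
`(q, r) ↦ ⟪B' q, B' r⟫` is coercive on `Q`, so Lax–Milgram makes `v ↦ b v` surjective onto `Q'`
and shows that the functionals `b (·) p` are exactly those vanishing on `K = ker b` (closed range).
A solution is built in three steps: lift `F` to some `u₀` with `b u₀ = F`; correct `u₀` inside `K`
by solving the Schur complement `(w, k) ↦ b₁ (a⁻¹ b₁ w) k` on `K`, coercive by (ii) and (iii), so
that `θ = -a⁻¹ b₁ u` annihilates `K`; recover `p` from the closed range. For stability split `u`
along `K ⊕ Kᗮ` and estimate in turn the `Kᗮ`-part by (i), `θ` by testing the first equation with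
`θ` and (iii), the `K`-part by (ii), and `p` by (i). Uniqueness is stability applied to the
difference of two solutions.
-/

open InnerProductSpace RealInnerProductSpace ContinuousLinearMap

section Riesz

variable {E F : Type*} [NormedAddCommGroup E] [InnerProductSpace ℝ E] [CompleteSpace E]
  [NormedAddCommGroup F] [NormedSpace ℝ F]

noncomputable def rieszComp (L : F →L[ℝ] StrongDual ℝ E) : F →L[ℝ] E :=
  (toDual ℝ E).symm.toContinuousLinearEquiv.toContinuousLinearMap.comp L

@[simp]
lemma inner_rieszComp_apply (L : F →L[ℝ] StrongDual ℝ E) (f : F) (e : E) :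
    ⟪rieszComp L f, e⟫ = L f e :=
  toDual_symm_apply

lemma norm_rieszComp_apply (L : F →L[ℝ] StrongDual ℝ E) (f : F) : ‖rieszComp L f‖ = ‖L f‖ :=
  (toDual ℝ E).symm.norm_map _

lemma IsCoercive.exists_comp_eq {β : E →L[ℝ] E →L[ℝ] ℝ} (hβ : IsCoercive β)
    (L : F →L[ℝ] StrongDual ℝ E) : ∃ G : F →L[ℝ] E, ∀ f, β (G f) = L f :=
  ⟨(hβ.continuousLinearEquivOfBilin.symm : E →L[ℝ] E).comp (rieszComp L), fun f => ext fun e => by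
    rw [← hβ.continuousLinearEquivOfBilin_apply]; simp⟩

lemma IsCoercive.exists_apply_eq {β : E →L[ℝ] E →L[ℝ] ℝ} (hβ : IsCoercive β)
    (φ : StrongDual ℝ E) : ∃ e, β e = φ :=
  let ⟨G, hG⟩ := hβ.exists_comp_eq (.id ℝ _)
  ⟨G φ, hG φ⟩

end Riesz

lemma isCoercive_of_sq_le {E : Type*} [NormedAddCommGroup E] [NormedSpace ℝ E]
    {β : E →L[ℝ] E →L[ℝ] ℝ} {c : ℝ} (hc : 0 < c) (h : ∀ e, c * ‖e‖ ^ 2 ≤ β e e) : IsCoercive β :=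
  ⟨c, hc, fun e => by simpa only [mul_assoc, sq] using h e⟩

lemma iSup_div_norm_le_opNorm {E : Type*} [NormedAddCommGroup E] [NormedSpace ℝ E]
    (φ : StrongDual ℝ E) : ⨆ v : {v : E // v ≠ 0}, φ v.1 / ‖v.1‖ ≤ ‖φ‖ :=
  Real.iSup_le (fun v => (div_le_iff₀ (norm_pos_iff.mpr v.2)).mpr
    ((le_abs_self _).trans (φ.le_opNorm v.1))) (norm_nonneg _)

lemma mul_le_of_mul_sq_le {c x y : ℝ} (hx : 0 ≤ x) (hy : 0 ≤ y) (h : c * x ^ 2 ≤ y * x) :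
    c * x ≤ y := by
  rcases hx.eq_or_lt with rfl | hx
  · simpa using hy
  · exact le_of_mul_le_mul_right (by nlinarith) hx

section InfSup

variable {E F : Type*} [NormedAddCommGroup E] [InnerProductSpace ℝ E] [CompleteSpace E]
  [NormedAddCommGroup F] [InnerProductSpace ℝ F]
  {b : E →L[ℝ] F →L[ℝ] ℝ} {c : ℝ}

lemma isCoercive_comp_rieszComp_flip (hc : 0 < c) (hb : ∀ q, c * ‖q‖ ≤ ‖b.flip q‖) :
    IsCoercive (b.comp (rieszComp b.flip)) := by
  refine isCoercive_of_sq_le (pow_pos hc 2) fun q => ?_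
  have hq : b (rieszComp b.flip q) q = ‖b.flip q‖ ^ 2 := by
    rw [← norm_rieszComp_apply, ← real_inner_self_eq_norm_sq, inner_rieszComp_apply, flip_apply]
  rw [comp_apply, hq, ← mul_pow]
  exact pow_le_pow_left₀ (by positivity) (hb q) 2

lemma exists_apply_eq_of_infsup [CompleteSpace F] (hc : 0 < c) (hb : ∀ q, c * ‖q‖ ≤ ‖b.flip q‖)
    (φ : StrongDual ℝ F) : ∃ u, b u = φ :=
  let ⟨y, hy⟩ := (isCoercive_comp_rieszComp_flip hc hb).exists_apply_eq φ
  ⟨rieszComp b.flip y, hy⟩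

lemma exists_flip_eq_of_infsup [CompleteSpace F] (hc : 0 < c) (hb : ∀ q, c * ‖q‖ ≤ ‖b.flip q‖)
    (φ : StrongDual ℝ E) (hφ : ∀ v, b v = 0 → φ v = 0) : ∃ p, b.flip p = φ := by
  set w := (toDual ℝ E).symm φ
  obtain ⟨y, hy⟩ := (isCoercive_comp_rieszComp_flip hc hb).exists_apply_eq (b w)
  have hker : b (w - rieszComp b.flip y) = 0 := by rw [map_sub, ← comp_apply, hy, sub_self]
  have hwy : w = rieszComp b.flip y := by
    rw [← sub_eq_zero, ← inner_self_eq_zero (𝕜 := ℝ)]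
    nth_rw 1 [inner_sub_left]
    rw [toDual_symm_apply, inner_rieszComp_apply, flip_apply, hker, hφ _ hker, zero_apply, sub_zero]
  refine ⟨y, ext fun v => ?_⟩
  rw [← inner_rieszComp_apply, ← hwy, toDual_symm_apply]

lemma mul_norm_le_norm_apply_of_mem_orthogonal [CompleteSpace F] (hc : 0 < c)
    (hb : ∀ q, c * ‖q‖ ≤ ‖b.flip q‖) {v : E} (hv : v ∈ b.kerᗮ) : c * ‖v‖ ≤ ‖b v‖ := by
  obtain ⟨p, hp⟩ := exists_flip_eq_of_infsup hc hb (toDual ℝ E v)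
    fun _ hk => Submodule.inner_left_of_mem_orthogonal hk hv
  have hvp : ‖v‖ ^ 2 = b v p := by
    rw [← real_inner_self_eq_norm_sq, ← toDual_apply_apply, ← hp, flip_apply]
  have hpv : c * ‖p‖ ≤ ‖v‖ := by simpa [hp] using hb p
  refine mul_le_of_mul_sq_le (norm_nonneg _) (norm_nonneg _) ?_
  calc c * ‖v‖ ^ 2 ≤ c * (‖b v‖ * ‖p‖) := by
        rw [hvp]; gcongr; exact (le_abs_self _).trans ((b v).le_opNorm p)
    _ ≤ ‖b v‖ * ‖v‖ := by nlinarith [norm_nonneg (b v)]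

end InfSup

lemma isCoercive_comp_of_infsup {V W : Type*} [NormedAddCommGroup V] [NormedSpace ℝ V]
    [NormedAddCommGroup W] [NormedSpace ℝ W] {a : V →L[ℝ] V →L[ℝ] ℝ} {b₁ : V →L[ℝ] W →L[ℝ] ℝ}
    {G : W →L[ℝ] V} {C₂ C₃ : ℝ} (hC₂ : 0 < C₂) (hC₃ : 0 < C₃)
    (hG : ∀ w, a (G w) = b₁.flip w) (ha : ∀ ξ, C₃ * ‖ξ‖ ^ 2 ≤ a ξ ξ)
    (hb₁ : ∀ w, C₂ * ‖w‖ ≤ ‖b₁.flip w‖) : IsCoercive (b₁.comp G) := by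
  -- `‖a‖ + 1` rather than `‖a‖`, which vanishes when `V` is trivial
  refine isCoercive_of_sq_le (c := C₃ * (C₂ / (‖a‖ + 1)) ^ 2) (by positivity) fun w => ?_
  have hGw : C₂ / (‖a‖ + 1) * ‖w‖ ≤ ‖G w‖ := by
    rw [div_mul_eq_mul_div, div_le_iff₀ (by positivity)]
    calc C₂ * ‖w‖ ≤ ‖a (G w)‖ := hG w ▸ hb₁ w
      _ ≤ ‖a‖ * ‖G w‖ := a.le_opNorm _
      _ ≤ ‖G w‖ * (‖a‖ + 1) := by nlinarith [norm_nonneg (G w)]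
  calc C₃ * (C₂ / (‖a‖ + 1)) ^ 2 * ‖w‖ ^ 2 = C₃ * (C₂ / (‖a‖ + 1) * ‖w‖) ^ 2 := by ring
    _ ≤ C₃ * ‖G w‖ ^ 2 := by gcongr
    _ ≤ a (G w) (G w) := ha (G w)
    _ = b₁.comp G w w := by rw [hG, flip_apply, comp_apply]

section ExpandedMixed

variable {X₁ X₂ Q : Type*} [NormedAddCommGroup X₁] [NormedSpace ℝ X₁]
  [NormedAddCommGroup X₂] [NormedSpace ℝ X₂] [NormedAddCommGroup Q] [NormedSpace ℝ Q]
  (a : X₁ →L[ℝ] X₁ →L[ℝ] ℝ) (b₁ : X₁ →L[ℝ] X₂ →L[ℝ] ℝ) (b : X₂ →L[ℝ] Q →L[ℝ] ℝ)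

def IsExpandedMixedSolution (F : StrongDual ℝ Q) (θ : X₁) (u : X₂) (p : Q) : Prop :=
  a θ + b₁.flip u = 0 ∧ b₁ θ + b.flip p = 0 ∧ b u = F

variable {a b₁ b}

lemma isExpandedMixedSolution_iff {F : StrongDual ℝ Q} {θ : X₁} {u : X₂} {p : Q} :
    IsExpandedMixedSolution a b₁ b F θ u p ↔
      (∀ ξ, a θ ξ + b₁ ξ u = 0) ∧ (∀ v, b₁ θ v + b v p = 0) ∧ ∀ q, b u q = F q := by
  simp only [IsExpandedMixedSolution, ContinuousLinearMap.ext_iff, add_apply, flip_apply,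
    zero_apply]

lemma IsExpandedMixedSolution.sub {F : StrongDual ℝ Q} {θ θ' : X₁} {u u' : X₂} {p p' : Q}
    (h : IsExpandedMixedSolution a b₁ b F θ u p) (h' : IsExpandedMixedSolution a b₁ b F θ' u' p') :
    IsExpandedMixedSolution a b₁ b 0 (θ - θ') (u - u') (p - p') := by
  obtain ⟨h₁, h₂, h₃⟩ := h
  obtain ⟨h₁', h₂', h₃'⟩ := h'
  refine ⟨?_, ?_, ?_⟩
  · rw [map_sub, map_sub, sub_add_sub_comm, h₁, h₁', sub_zero]
  · rw [map_sub, map_sub, sub_add_sub_comm, h₂, h₂', sub_zero]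
  · rw [map_sub, h₃, h₃', sub_self]

section Estimates

variable {F : StrongDual ℝ Q} {θ : X₁} {uker uperp : X₂} {p : Q} {C₁ C₂ C₃ : ℝ}

lemma IsExpandedMixedSolution.mul_norm_le_of_coercive (ha : ∀ ξ, C₃ * ‖ξ‖ ^ 2 ≤ a ξ ξ)
    (h : IsExpandedMixedSolution a b₁ b F θ (uker + uperp) p) (huker : b uker = 0) :
    C₃ * ‖θ‖ ≤ ‖b₁‖ * ‖uperp‖ := by
  obtain ⟨h₁, h₂, -⟩ := h
  have hθθ : a θ θ = -b₁ θ uperp := by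
    have e₁ := congr($h₁ θ)
    have e₂ := congr($h₂ uker)
    simp only [map_add, add_apply, flip_apply, zero_apply, huker, add_zero] at e₁ e₂
    linarith
  refine mul_le_of_mul_sq_le (norm_nonneg _) (by positivity) ?_
  calc C₃ * ‖θ‖ ^ 2 ≤ a θ θ := ha θ
    _ = -b₁ θ uperp := hθθ
    _ ≤ ‖b₁ θ uperp‖ := neg_le_abs _
    _ ≤ ‖b₁‖ * ‖uperp‖ * ‖θ‖ := by linarith [b₁.le_opNorm₂ θ uperp]

lemma IsExpandedMixedSolution.mul_norm_le_of_infsup_ker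
    (hb₁ : ∀ v, b v = 0 → C₂ * ‖v‖ ≤ ‖b₁.flip v‖)
    (h : IsExpandedMixedSolution a b₁ b F θ (uker + uperp) p) (huker : b uker = 0) :
    C₂ * ‖uker‖ ≤ ‖a‖ * ‖θ‖ + ‖b₁‖ * ‖uperp‖ := by
  have hflip : b₁.flip uker = -a θ - b₁.flip uperp := by
    rw [eq_sub_iff_add_eq, ← map_add, eq_neg_of_add_eq_zero_right h.1]
  calc C₂ * ‖uker‖ ≤ ‖b₁.flip uker‖ := hb₁ uker huker
    _ ≤ ‖a θ‖ + ‖b₁.flip uperp‖ := by rw [hflip, ← norm_neg (a θ)]; exact norm_sub_le _ _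
    _ ≤ ‖a‖ * ‖θ‖ + ‖b₁‖ * ‖uperp‖ := by
      rw [← opNorm_flip b₁]; gcongr <;> exact le_opNorm _ _

lemma IsExpandedMixedSolution.mul_norm_le_of_infsup {u : X₂} (hb : ∀ q, C₁ * ‖q‖ ≤ ‖b.flip q‖)
    (h : IsExpandedMixedSolution a b₁ b F θ u p) : C₁ * ‖p‖ ≤ ‖b₁‖ * ‖θ‖ :=
  calc C₁ * ‖p‖ ≤ ‖b.flip p‖ := hb p
    _ = ‖b₁ θ‖ := by rw [eq_neg_of_add_eq_zero_right h.2.1, norm_neg]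
    _ ≤ ‖b₁‖ * ‖θ‖ := b₁.le_opNorm θ

end Estimates

lemma IsExpandedMixedSolution.eq_of_stable {C : ℝ}
    (hstab : ∀ F θ u p, IsExpandedMixedSolution a b₁ b F θ u p → ‖θ‖ + ‖u‖ + ‖p‖ ≤ C * ‖F‖)
    {F : StrongDual ℝ Q} {θ θ' : X₁} {u u' : X₂} {p p' : Q}
    (h : IsExpandedMixedSolution a b₁ b F θ u p) (h' : IsExpandedMixedSolution a b₁ b F θ' u' p') :
    (θ, u, p) = (θ', u', p') := by
  have hd := hstab _ _ _ _ (h.sub h')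
  rw [norm_zero, mul_zero] at hd
  simp only [Prod.mk.injEq, ← sub_eq_zero (a := θ), ← sub_eq_zero (a := u), ← sub_eq_zero (a := p),
    ← norm_le_zero_iff]
  refine ⟨?_, ?_, ?_⟩ <;>
    linarith [norm_nonneg (θ - θ'), norm_nonneg (u - u'), norm_nonneg (p - p')]

end ExpandedMixed

section WellPosed

variable {X₁ X₂ Q : Type*}
  [NormedAddCommGroup X₁] [InnerProductSpace ℝ X₁]
  [NormedAddCommGroup X₂] [InnerProductSpace ℝ X₂] [CompleteSpace X₂]
  [NormedAddCommGroup Q] [InnerProductSpace ℝ Q] [CompleteSpace Q]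
  {a : X₁ →L[ℝ] X₁ →L[ℝ] ℝ} {b₁ : X₁ →L[ℝ] X₂ →L[ℝ] ℝ} {b : X₂ →L[ℝ] Q →L[ℝ] ℝ}
  {C₁ C₂ C₃ : ℝ}

lemma exists_isExpandedMixedSolution [CompleteSpace X₁]
    (hC₁ : 0 < C₁) (hC₂ : 0 < C₂) (hC₃ : 0 < C₃)
    (hb : ∀ q, C₁ * ‖q‖ ≤ ‖b.flip q‖) (hb₁ : ∀ v, b v = 0 → C₂ * ‖v‖ ≤ ‖b₁.flip v‖)
    (ha : ∀ ξ, C₃ * ‖ξ‖ ^ 2 ≤ a ξ ξ) (F : StrongDual ℝ Q) :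
    ∃ θ u p, IsExpandedMixedSolution a b₁ b F θ u p := by
  obtain ⟨u₀, hu₀⟩ := exists_apply_eq_of_infsup hC₁ hb F
  obtain ⟨G, hG⟩ := (isCoercive_of_sq_le hC₃ ha).exists_comp_eq b₁.flip
  set b₁K : X₁ →L[ℝ] b.ker →L[ℝ] ℝ := (b₁.flip.comp b.ker.subtypeL).flip
  have hS : IsCoercive (b₁K.comp (G.comp b.ker.subtypeL)) :=
    isCoercive_comp_of_infsup hC₂ hC₃ (fun w => by simp [b₁K, hG]) ha
      (fun w => by simpa [b₁K] using hb₁ w w.2)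
  obtain ⟨w, hw⟩ := hS.exists_apply_eq (-b₁K (G u₀))
  set θ := -G (u₀ + w)
  have hθ : ∀ v, b v = 0 → b₁ θ v = 0 := fun v hv => by
    have := congr($hw ⟨v, hv⟩)
    simp only [comp_apply, Submodule.coe_subtypeL, Submodule.subtype_apply, flip_apply, neg_apply,
      map_add, neg_add_rev, map_neg, add_apply, b₁K, θ] at this ⊢
    linarith
  obtain ⟨p, hp⟩ := exists_flip_eq_of_infsup hC₁ hb (-b₁ θ) (fun v hv => by simp [hθ v hv])
  refine ⟨θ, u₀ + w, p, ?_, ?_, ?_⟩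
  · simp [θ, hG]
  · rw [hp, add_neg_cancel]
  · rw [map_add, hu₀, show b w = 0 from w.2, add_zero]

lemma exists_norm_le_of_isExpandedMixedSolution (hC₁ : 0 < C₁) (hC₂ : 0 < C₂) (hC₃ : 0 < C₃)
    (hb : ∀ q, C₁ * ‖q‖ ≤ ‖b.flip q‖) (hb₁ : ∀ v, b v = 0 → C₂ * ‖v‖ ≤ ‖b₁.flip v‖)
    (ha : ∀ ξ, C₃ * ‖ξ‖ ^ 2 ≤ a ξ ξ) :
    ∃ C > 0, ∀ F θ u p, IsExpandedMixedSolution a b₁ b F θ u p → ‖θ‖ + ‖u‖ + ‖p‖ ≤ C * ‖F‖ := by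
  set cperp := C₁⁻¹
  set cθ := ‖b₁‖ * cperp / C₃
  set cker := (‖a‖ * cθ + ‖b₁‖ * cperp) / C₂
  set cp := ‖b₁‖ * cθ / C₁
  refine ⟨cθ + (cker + cperp) + cp, by positivity, fun F θ u p h => ?_⟩
  obtain ⟨uker, huker, uperp, huperp, rfl⟩ := b.ker.exists_add_mem_mem_orthogonal u
  have huker' : b uker = 0 := huker
  have hperp : ‖uperp‖ ≤ cperp * ‖F‖ := by
    have hbperp : b uperp = F := by rw [← h.2.2, map_add, huker', zero_add]
    rw [inv_mul_eq_div, le_div_iff₀' hC₁, ← hbperp]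
    exact mul_norm_le_norm_apply_of_mem_orthogonal hC₁ hb huperp
  have hθ : ‖θ‖ ≤ cθ * ‖F‖ := calc
    ‖θ‖ ≤ ‖b₁‖ * ‖uperp‖ / C₃ := (le_div_iff₀' hC₃).2 (h.mul_norm_le_of_coercive ha huker')
    _ ≤ ‖b₁‖ * (cperp * ‖F‖) / C₃ := by gcongr
    _ = cθ * ‖F‖ := by ring
  have hker : ‖uker‖ ≤ cker * ‖F‖ := calc
    ‖uker‖ ≤ (‖a‖ * ‖θ‖ + ‖b₁‖ * ‖uperp‖) / C₂ :=
        (le_div_iff₀' hC₂).2 (h.mul_norm_le_of_infsup_ker hb₁ huker')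
    _ ≤ (‖a‖ * (cθ * ‖F‖) + ‖b₁‖ * (cperp * ‖F‖)) / C₂ := by gcongr
    _ = cker * ‖F‖ := by ring
  have hp : ‖p‖ ≤ cp * ‖F‖ := calc
    ‖p‖ ≤ ‖b₁‖ * ‖θ‖ / C₁ := (le_div_iff₀' hC₁).2 (h.mul_norm_le_of_infsup hb)
    _ ≤ ‖b₁‖ * (cθ * ‖F‖) / C₁ := by gcongr
    _ = cp * ‖F‖ := by ring
  calc ‖θ‖ + ‖uker + uperp‖ + ‖p‖ ≤ ‖θ‖ + (‖uker‖ + ‖uperp‖) + ‖p‖ := by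
        gcongr; exact norm_add_le _ _
    _ ≤ (cθ + (cker + cperp) + cp) * ‖F‖ := by linarith

end WellPosed

/-- **Well-posedness of the continuum dual-dual (expanded) mixed problem.**
Let `X₁, X₂, Q` be real Hilbert spaces, `a, b₁, b` bounded bilinear forms.
Under the continuous inf-sup conditions for `b` and for `b₁` on the kernel of `B`,
and coercivity of `a`, for every continuous linear functional `F` on `Q` the
problem has a unique solution, with a stability bound `‖θ‖+‖u‖+‖p‖ ≤ C‖F‖`
where `C` does not depend on `F`. -/
theorem expanded_mixed_wellposed
    {X₁ X₂ Q : Type*}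
    [NormedAddCommGroup X₁] [InnerProductSpace ℝ X₁] [CompleteSpace X₁]
    [NormedAddCommGroup X₂] [InnerProductSpace ℝ X₂] [CompleteSpace X₂]
    [NormedAddCommGroup Q] [InnerProductSpace ℝ Q] [CompleteSpace Q]
    (a : X₁ →L[ℝ] X₁ →L[ℝ] ℝ)
    (b₁ : X₁ →L[ℝ] X₂ →L[ℝ] ℝ)
    (b : X₂ →L[ℝ] Q →L[ℝ] ℝ)
    (C₁ C₂ C₃ : ℝ) (hC₁ : 0 < C₁) (hC₂ : 0 < C₂) (hC₃ : 0 < C₃)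
    -- (i) inf-sup condition for b
    (hinfsup_b : ∀ q : Q,
      C₁ * ‖q‖ ≤ ⨆ v : {v : X₂ // v ≠ 0}, b v.1 q / ‖v.1‖)
    -- (ii) inf-sup condition for b₁ on the kernel K of B
    (hinfsup_b₁ : ∀ v : X₂, (∀ q : Q, b v q = 0) →
      C₂ * ‖v‖ ≤ ⨆ ξ : {ξ : X₁ // ξ ≠ 0}, b₁ ξ.1 v / ‖ξ.1‖)
    -- (iii) coercivity of a
    (hcoer : ∀ ξ : X₁, C₃ * ‖ξ‖ ^ 2 ≤ a ξ ξ) :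
    ∃ C > 0, ∀ F : Q →L[ℝ] ℝ,
      (∃! s : X₁ × X₂ × Q,
        (∀ ξ : X₁, a s.1 ξ + b₁ ξ s.2.1 = 0) ∧
        (∀ v : X₂, b₁ s.1 v + b v s.2.2 = 0) ∧
        (∀ q : Q, b s.2.1 q = F q)) ∧
      (∀ (θ : X₁) (u : X₂) (p : Q),
        (∀ ξ : X₁, a θ ξ + b₁ ξ u = 0) →
        (∀ v : X₂, b₁ θ v + b v p = 0) →
        (∀ q : Q, b u q = F q) →
        ‖θ‖ + ‖u‖ + ‖p‖ ≤ C * ‖F‖) := by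
  have hb : ∀ q, C₁ * ‖q‖ ≤ ‖b.flip q‖ := fun q =>
    (hinfsup_b q).trans (by simpa only [flip_apply] using iSup_div_norm_le_opNorm (b.flip q))
  have hb₁ : ∀ v, b v = 0 → C₂ * ‖v‖ ≤ ‖b₁.flip v‖ := fun v hv =>
    (hinfsup_b₁ v fun q => by rw [hv, zero_apply]).trans
      (by simpa only [flip_apply] using iSup_div_norm_le_opNorm (b₁.flip v))
  obtain ⟨C, hC, hstab⟩ := exists_norm_le_of_isExpandedMixedSolution hC₁ hC₂ hC₃ hb hb₁ hcoer
  refine ⟨C, hC, fun F => ⟨?_, fun θ u p h₁ h₂ h₃ =>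
    hstab F θ u p (isExpandedMixedSolution_iff.2 ⟨h₁, h₂, h₃⟩)⟩⟩
  obtain ⟨θ, u, p, h⟩ := exists_isExpandedMixedSolution hC₁ hC₂ hC₃ hb hb₁ hcoer F
  exact ⟨(θ, u, p), isExpandedMixedSolution_iff.1 h,
    fun s hs => (isExpandedMixedSolution_iff.2 hs).eq_of_stable hstab h⟩
end

section
/- Let X_{1,h} ⊆ X₁, X_{2,h} ⊆ X₂ and Q_h ⊆ Q be finite-dimensional subspaces and let F_h be a linear functional on Q_h. Assume: (1) there is a constant C₁ > 0 such that for every q_h ∈ Q_h, sup over v_h ∈ X_{2,h} \ {0} of b(v_h, q_h)/‖v_h‖_{X₂} ≥ C₁ ‖q_h‖_Q; (2) letting ker B_h := {v_h ∈ X_{2,h} : b(v_h, q_h) = 0 for all q_h ∈ Q_h}, there is a constant C₂ > 0 such that for every v_h ∈ ker B_h, sup over ξ_h ∈ X_{1,h} \ {0} of b₁(ξ_h, v_h)/‖ξ_h‖_{X₁} ≥ C₂ ‖v_h‖_{X₂}; (3) there are constants C₃, C₄ > 0 such that C₃ ‖ξ_h‖²_{X₁} ≤ a(ξ_h, ξ_h)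 ≤ C₄ ‖ξ_h‖²_{X₁} for all ξ_h ∈ X_{1,h}. Then there exists a unique (θ_h, u_h, p_h) ∈ X_{1,h} × X_{2,h} × Q_h satisfying a(θ_h, ξ_h) + b₁(ξ_h, u_h) = 0 for all ξ_h ∈ X_{1,h}, b₁(θ_h, v_h) + b(v_h, p_h) = 0 for all v_h ∈ X_{2,h}, and b(u_h, q_h) = F_h(q_h) for all q_h ∈ Q_h. -/
/-!
The discrete problem is a square linear system: the solution space `X1h × X2h × Qh` and the
space of right-hand sides (the duals of the three subspaces) have the same finite dimension, so
it suffices to show that the homogeneous system has only the trivial solution. Testing the three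
equations with `θ`, `u` and `p` gives `a(θ, θ) = 0`, so `θ = 0` by coercivity; the second
equation then says that `p` is annihilated by `b(·, p)`, so `p = 0` by the inf-sup condition
for `b`, and the first says that `u ∈ ker B_h` is annihilated by `b₁`, so `u = 0` by the
inf-sup condition for `b₁`.
-/

open Module

section ExpandedMixed

variable {R V₁ V₂ W : Type*} [CommSemiring R]
  [AddCommMonoid V₁] [Module R V₁] [AddCommMonoid V₂] [Module R V₂] [AddCommMonoid W] [Module R W]

def expandedMixedOperator (A : V₁ →ₗ[R] V₁ →ₗ[R] R) (B₁ : V₁ →ₗ[R] V₂ →ₗ[R] R)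
    (B : V₂ →ₗ[R] W →ₗ[R] R) : V₁ × V₂ × W →ₗ[R] Dual R V₁ × Dual R V₂ × Dual R W :=
  (A ∘ₗ LinearMap.fst R V₁ (V₂ × W) +
      B₁.flip ∘ₗ LinearMap.fst R V₂ W ∘ₗ LinearMap.snd R V₁ (V₂ × W)).prod
    ((B₁ ∘ₗ LinearMap.fst R V₁ (V₂ × W) +
        B.flip ∘ₗ LinearMap.snd R V₂ W ∘ₗ LinearMap.snd R V₁ (V₂ × W)).prod
      (B ∘ₗ LinearMap.fst R V₂ W ∘ₗ LinearMap.snd R V₁ (V₂ × W)))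

variable (A : V₁ →ₗ[R] V₁ →ₗ[R] R) (B₁ : V₁ →ₗ[R] V₂ →ₗ[R] R) (B : V₂ →ₗ[R] W →ₗ[R] R)

theorem expandedMixedOperator_apply (s : V₁ × V₂ × W) :
    expandedMixedOperator A B₁ B s = (A s.1 + B₁.flip s.2.1, B₁ s.1 + B.flip s.2.2, B s.2.1) :=
  rfl

theorem expandedMixedOperator_eq_iff (s : V₁ × V₂ × W) (F : Dual R W) :
    expandedMixedOperator A B₁ B s = (0, 0, F) ↔
      (∀ ξ, A s.1 ξ + B₁ ξ s.2.1 = 0) ∧ (∀ v, B₁ s.1 v + B v s.2.2 = 0) ∧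
        ∀ q, B s.2.1 q = F q := by
  simp only [expandedMixedOperator_apply, Prod.mk.injEq, LinearMap.ext_iff,
    LinearMap.add_apply, LinearMap.flip_apply, LinearMap.zero_apply]

theorem expandedMixedOperator_ker_eq_bot (hA : ∀ θ, A θ θ = 0 → θ = 0)
    (hB : ∀ p, (∀ v, B v p = 0) → p = 0)
    (hB₁ : ∀ u, (∀ q, B u q = 0) → (∀ ξ, B₁ ξ u = 0) → u = 0) :
    LinearMap.ker (expandedMixedOperator A B₁ B) = ⊥ := by
  rw [LinearMap.ker_eq_bot']
  rintro ⟨θ, u, p⟩ hs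
  obtain ⟨h₁, h₂, h₃⟩ := (expandedMixedOperator_eq_iff A B₁ B _ 0).1 hs
  simp only [LinearMap.zero_apply] at h₁ h₂ h₃
  have hθu : B₁ θ u = 0 := by simpa [h₃ p] using h₂ u
  have hθ : θ = 0 := hA θ (by simpa [hθu] using h₁ θ)
  subst hθ
  have hp : p = 0 := hB p (by simpa using h₂)
  have hu : u = 0 := hB₁ u h₃ (by simpa using h₁)
  simp [hu, hp]

theorem expandedMixedOperator_bijective {K V₁ V₂ W : Type*} [Field K]
    [AddCommGroup V₁] [Module K V₁] [AddCommGroup V₂] [Module K V₂] [AddCommGroup W] [Module K W]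
    [FiniteDimensional K V₁] [FiniteDimensional K V₂] [FiniteDimensional K W]
    (A : V₁ →ₗ[K] V₁ →ₗ[K] K) (B₁ : V₁ →ₗ[K] V₂ →ₗ[K] K) (B : V₂ →ₗ[K] W →ₗ[K] K)
    (hA : ∀ θ, A θ θ = 0 → θ = 0) (hB : ∀ p, (∀ v, B v p = 0) → p = 0)
    (hB₁ : ∀ u, (∀ q, B u q = 0) → (∀ ξ, B₁ ξ u = 0) → u = 0) :
    Function.Bijective (expandedMixedOperator A B₁ B) := by
  have hinj := LinearMap.ker_eq_bot.1 (expandedMixedOperator_ker_eq_bot A B₁ B hA hB hB₁)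
  have hdim : finrank K (V₁ × V₂ × W) = finrank K (Dual K V₁ × Dual K V₂ × Dual K W) := by
    simp only [Module.finrank_prod, Subspace.dual_finrank_eq]
  exact ⟨hinj, (LinearMap.injective_iff_surjective_of_finrank_eq_finrank hdim).1 hinj⟩

end ExpandedMixed

theorem eq_zero_of_mul_norm_le_iSup_div {ι : Sort*} {E : Type*} [NormedAddCommGroup E]
    {C : ℝ} (hC : 0 < C) {x : E} {f g : ι → ℝ} (hx : C * ‖x‖ ≤ ⨆ i, f i / g i)
    (hf : ∀ i, f i = 0) : x = 0 := by
  simp only [hf, zero_div, Real.iSup_const_zero] at hx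
  exact norm_le_zero_iff.1 (nonpos_of_mul_nonpos_right hx hC)

theorem eq_zero_of_mul_norm_sq_le_zero {E : Type*} [NormedAddCommGroup E] {C : ℝ} (hC : 0 < C)
    {x : E} (hx : C * ‖x‖ ^ 2 ≤ 0) : x = 0 :=
  norm_eq_zero.1 (sq_nonpos_iff _ |>.1 (nonpos_of_mul_nonpos_right hx hC))

theorem discrete_expanded_mixed_wellposed_general
    {X₁ X₂ Q : Type*}
    [NormedAddCommGroup X₁] [InnerProductSpace ℝ X₁]
    [NormedAddCommGroup X₂] [InnerProductSpace ℝ X₂]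
    [NormedAddCommGroup Q] [InnerProductSpace ℝ Q]
    (a : X₁ →L[ℝ] X₁ →L[ℝ] ℝ)
    (b₁ : X₁ →L[ℝ] X₂ →L[ℝ] ℝ)
    (b : X₂ →L[ℝ] Q →L[ℝ] ℝ)
    (X1h : Submodule ℝ X₁) (X2h : Submodule ℝ X₂) (Qh : Submodule ℝ Q)
    [FiniteDimensional ℝ X1h] [FiniteDimensional ℝ X2h] [FiniteDimensional ℝ Qh]
    (Fh : Qh →ₗ[ℝ] ℝ)
    (C₁ C₂ C₃ C₄ : ℝ) (hC₁ : 0 < C₁) (hC₂ : 0 < C₂) (hC₃ : 0 < C₃)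
    -- (1) discrete inf-sup condition for b
    (hinfsup_b : ∀ qh : Qh,
      C₁ * ‖(qh : Q)‖ ≤
        ⨆ vh : {vh : X2h // vh ≠ 0}, b (vh.1 : X₂) (qh : Q) / ‖(vh.1 : X₂)‖)
    -- (2) discrete inf-sup condition for b₁ on ker Bh
    (hinfsup_b₁ : ∀ vh : X2h, (∀ qh : Qh, b (vh : X₂) (qh : Q) = 0) →
      C₂ * ‖(vh : X₂)‖ ≤
        ⨆ ξh : {ξh : X1h // ξh ≠ 0}, b₁ (ξh.1 : X₁) (vh : X₂) / ‖(ξh.1 : X₁)‖)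
    -- (3) coercivity and boundedness of a on X1h
    (hcoer : ∀ ξh : X1h,
      C₃ * ‖(ξh : X₁)‖ ^ 2 ≤ a (ξh : X₁) (ξh : X₁) ∧
      a (ξh : X₁) (ξh : X₁) ≤ C₄ * ‖(ξh : X₁)‖ ^ 2) :
    ∃! s : X1h × X2h × Qh,
      (∀ ξh : X1h, a (s.1 : X₁) (ξh : X₁) + b₁ (ξh : X₁) (s.2.1 : X₂) = 0) ∧
      (∀ vh : X2h, b₁ (s.1 : X₁) (vh : X₂) + b (vh : X₂) (s.2.2 : Q) = 0) ∧
      (∀ qh : Qh, b (s.2.1 : X₂) (qh : Q) = Fh qh) := by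
  let A := a.toLinearMap₁₂.compl₁₂ X1h.subtype X1h.subtype
  let B₁ := b₁.toLinearMap₁₂.compl₁₂ X1h.subtype X2h.subtype
  let B := b.toLinearMap₁₂.compl₁₂ X2h.subtype Qh.subtype
  have hbij : Function.Bijective (expandedMixedOperator A B₁ B) :=
    expandedMixedOperator_bijective A B₁ B
      (fun θ hθ => Subtype.ext <| eq_zero_of_mul_norm_sq_le_zero hC₃ ((hcoer θ).1.trans_eq hθ))
      (fun p hp => Subtype.ext <| eq_zero_of_mul_norm_le_iSup_div hC₁ (hinfsup_b p)
        fun v => hp v.1)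
      (fun u hu hb₁ => Subtype.ext <| eq_zero_of_mul_norm_le_iSup_div hC₂ (hinfsup_b₁ u hu)
        fun ξ => hb₁ ξ.1)
  obtain ⟨s, hs, huniq⟩ := hbij.existsUnique (0, 0, Fh)
  exact ⟨s, (expandedMixedOperator_eq_iff A B₁ B s Fh).1 hs,
    fun t ht => huniq t ((expandedMixedOperator_eq_iff A B₁ B t Fh).2 ht)⟩

/-- **Well-posedness of the discrete dual-dual (expanded) mixed problem.**
Let `X₁, X₂, Q` be real Hilbert spaces, `a, b₁, b` bounded bilinear forms, and
`X1h ⊆ X₁`, `X2h ⊆ X₂`, `Qh ⊆ Q` finite-dimensional subspaces, `Fh` a linear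
functional on `Qh`.  Under the discrete inf-sup conditions (1), (2) and the
coercivity/boundedness condition (3), the discrete problem has a unique
solution `(θh, uh, ph) ∈ X1h × X2h × Qh`. -/
theorem discrete_expanded_mixed_wellposed
    {X₁ X₂ Q : Type*}
    [NormedAddCommGroup X₁] [InnerProductSpace ℝ X₁] [CompleteSpace X₁]
    [NormedAddCommGroup X₂] [InnerProductSpace ℝ X₂] [CompleteSpace X₂]
    [NormedAddCommGroup Q] [InnerProductSpace ℝ Q] [CompleteSpace Q]
    (a : X₁ →L[ℝ] X₁ →L[ℝ] ℝ)
    (b₁ : X₁ →L[ℝ] X₂ →L[ℝ] ℝ)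
    (b : X₂ →L[ℝ] Q →L[ℝ] ℝ)
    (X1h : Submodule ℝ X₁) (X2h : Submodule ℝ X₂) (Qh : Submodule ℝ Q)
    [FiniteDimensional ℝ X1h] [FiniteDimensional ℝ X2h] [FiniteDimensional ℝ Qh]
    (Fh : Qh →ₗ[ℝ] ℝ)
    (C₁ C₂ C₃ C₄ : ℝ) (hC₁ : 0 < C₁) (hC₂ : 0 < C₂) (hC₃ : 0 < C₃) (hC₄ : 0 < C₄)
    -- (1) discrete inf-sup condition for b
    (hinfsup_b : ∀ qh : Qh,
      C₁ * ‖(qh : Q)‖ ≤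
        ⨆ vh : {vh : X2h // vh ≠ 0}, b (vh.1 : X₂) (qh : Q) / ‖(vh.1 : X₂)‖)
    -- (2) discrete inf-sup condition for b₁ on ker Bh
    (hinfsup_b₁ : ∀ vh : X2h, (∀ qh : Qh, b (vh : X₂) (qh : Q) = 0) →
      C₂ * ‖(vh : X₂)‖ ≤
        ⨆ ξh : {ξh : X1h // ξh ≠ 0}, b₁ (ξh.1 : X₁) (vh : X₂) / ‖(ξh.1 : X₁)‖)
    -- (3) coercivity and boundedness of a on X1h
    (hcoer : ∀ ξh : X1h,
      C₃ * ‖(ξh : X₁)‖ ^ 2 ≤ a (ξh : X₁) (ξh : X₁) ∧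
      a (ξh : X₁) (ξh : X₁) ≤ C₄ * ‖(ξh : X₁)‖ ^ 2) :
    ∃! s : X1h × X2h × Qh,
      (∀ ξh : X1h, a (s.1 : X₁) (ξh : X₁) + b₁ (ξh : X₁) (s.2.1 : X₂) = 0) ∧
      (∀ vh : X2h, b₁ (s.1 : X₁) (vh : X₂) + b (vh : X₂) (s.2.2 : Q) = 0) ∧
      (∀ qh : Qh, b (s.2.1 : X₂) (qh : Q) = Fh qh) :=
  discrete_expanded_mixed_wellposed_general a b₁ b X1h X2h Qh Fh C₁ C₂ C₃ C₄ hC₁ hC₂ hC₃ hinfsup_b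
    hinfsup_b₁ hcoer
end

section
/- Let X₂ ⊆ X̂₂ be a closed subspace and suppose (θ, u, p) ∈ X₁ × X₂ × Q satisfies a(θ, ξ) + b₁(ξ, u) = 0 for all ξ ∈ X₁, b₁(θ, v) + b(v, p) = 0 for all v ∈ X₂, and b(u, q) = F(q) for all q ∈ Q, where F is a continuous linear functional on Q. Let X_{1,h} ⊆ X₁, X_{2,h} ⊆ X̂₂ and Q_h ⊆ Q be finite-dimensional subspaces and let (θ_h, u_h, p_h) ∈ X_{1,h} × X_{2,h} × Q_h satisfy a(θ_h, ξ_h) + b₁(ξ_h, u_h) = 0 for all ξ_h ∈ X_{1,h}, b₁(θ_h, v_h) + b(v_h, p_h) = 0 for all v_h ∈ X_{2,h}, and b(u_h, q_h) = F(q_h) for all q_h ∈ Q_h. Assume the discrete inf-sup and coercivity conditions: (1) there is C₁ > 0 with sup over v_h ∈ X_{2,h} \ {0} of b(v_h, q_h)/‖v_h‖ ≥ C₁ ‖q_h‖ for all q_h ∈ Q_h; (2) with ker B_h := {v_h ∈ X_{2,h} : b(v_h, q_h) = 0 for all q_h ∈ Q_h}, there is C₂ > 0 with sup over ξ_h ∈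 X_{1,h} \ {0} of b₁(ξ_h, v_h)/‖ξ_h‖ ≥ C₂ ‖v_h‖ for all v_h ∈ ker B_h; (3) there are C₃, C₄ > 0 with C₃ ‖ξ_h‖² ≤ a(ξ_h, ξ_h) ≤ C₄ ‖ξ_h‖² for all ξ_h ∈ X_{1,h}. Then there exists a constant C > 0, depending only on the norms of b₁ and b and on C₁, C₂, C₃, C₄, such that ‖θ − θ_h‖_{X₁} + ‖u − u_h‖_{X̂₂} + ‖p − p_h‖_Q ≤ C [ inf over (ξ_h, v_h, q_h) ∈ X_{1,h} × X_{2,h} × Q_h of (‖θ − ξ_h‖_{X₁} + ‖u − v_h‖_{X̂₂} + ‖p − q_h‖_Q) + sup over v_h ∈ X_{2,h} \ {0} of (−b₁(θ, v_h) − b(v_h, p))/‖v_h‖_{X̂₂} ]. -/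
/-!
For a fixed comparison triple `(ξh, vh, qh)`, subtracting the discrete equations from the
continuum ones shows that `(θh - ξh, uh - vh, ph - qh)` solves the discrete saddle-point system
with right-hand sides bounded by the approximation errors of `(ξh, vh, qh)`, plus, in the second
equation, the consistency error: `X2h` need not lie in `X₂`, where the continuum equation is tested.
The discrete inf-sup conditions and coercivity make that system stable. The triangle inequality
and an infimum over comparison triples conclude.
-/

open RealInnerProductSpace

theorem ContinuousLinearMap.iSup_div_norm_eq_opNorm {E : Type*} [NormedAddCommGroup E]
    [NormedSpace ℝ E] (φ : E →L[ℝ] ℝ) :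
    ⨆ v : {v : E // v ≠ 0}, φ v / ‖(v : E)‖ = ‖φ‖ := by
  set S := ⨆ v : {v : E // v ≠ 0}, φ v / ‖(v : E)‖
  have hle : ∀ v : {v : E // v ≠ 0}, φ v / ‖(v : E)‖ ≤ ‖φ‖ := fun v =>
    div_le_of_le_mul₀ (norm_nonneg _) (norm_nonneg _)
      ((le_abs_self _).trans (φ.le_opNorm v))
  have hbdd : BddAbove (Set.range fun v : {v : E // v ≠ 0} => φ v / ‖(v : E)‖) :=
    ⟨‖φ‖, Set.forall_mem_range.2 hle⟩
  refine le_antisymm (Real.iSup_le hle (norm_nonneg φ)) ?_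
  have hbound : ∀ v : E, |φ v| ≤ S * ‖v‖ := by
    have hφ : ∀ v : E, φ v ≤ S * ‖v‖ := by
      intro v
      rcases eq_or_ne v 0 with rfl | hv
      · simp
      · exact (div_le_iff₀ (norm_pos_iff.2 hv)).1 (le_ciSup hbdd ⟨v, hv⟩)
    refine fun v => abs_le.2 ⟨?_, hφ v⟩
    simpa [neg_le] using hφ (-v)
  -- on the trivial space both sides vanish, the left one by the convention `⨆ ∅ = 0`
  have hS : 0 ≤ S := by
    rcases isEmpty_or_nonempty {v : E // v ≠ 0} with hE | ⟨v, hv⟩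
    · exact (Real.iSup_of_isEmpty _).ge
    · have hv' : 0 < ‖v‖ := norm_pos_iff.2 hv
      exact le_of_mul_le_mul_right (by simpa using (abs_nonneg _).trans (hbound v)) hv'
  exact φ.opNorm_le_bound hS hbound

theorem ContinuousLinearMap.norm_comp_subtypeL_le {X : Type*} [NormedAddCommGroup X]
    [NormedSpace ℝ X] (f : X →L[ℝ] ℝ) (U : Submodule ℝ X) : ‖f.comp U.subtypeL‖ ≤ ‖f‖ :=
  (f.opNorm_comp_le _).trans (mul_le_of_le_one_right (norm_nonneg f) U.norm_subtypeL_le)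

theorem Submodule.norm_sub_coe_le {R X : Type*} [Ring R] [SeminormedAddCommGroup X] [Module R X]
    {U : Submodule R X} (x : X) (y z : U) : ‖x - y‖ ≤ ‖x - z‖ + ‖y - z‖ := by
  simpa [norm_sub_rev (z : X)] using norm_sub_le_norm_sub_add_norm_sub x z y

theorem le_mul_ciInf_add {ι : Type*} [Nonempty ι] {f : ι → ℝ} {x C s : ℝ} (hC : 0 < C)
    (h : ∀ i, x ≤ C * (f i + s)) : x ≤ C * ((⨅ i, f i) + s) := by
  have : x / C - s ≤ ⨅ i, f i := le_ciInf fun i => by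
    rw [sub_le_iff_le_add, div_le_iff₀' hC]; exact h i
  calc x = C * (x / C - s + s) := by field_simp; ring
    _ ≤ C * ((⨅ i, f i) + s) := by gcongr

theorem le_of_mul_sq_le_linear {c x e α β : ℝ} (hc : 0 < c) (he : 0 ≤ e) (hα : 0 ≤ α)
    (hβ : 0 ≤ β) (h : c * x ^ 2 ≤ α * e * x + β * e ^ 2) : x ≤ ((α + β) / c + 1) * e := by
  rw [add_mul, one_mul, div_mul_eq_mul_div]
  rcases le_or_gt x e with hxe | hex
  · exact hxe.trans (le_add_of_nonneg_left (by positivity))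
  · have hx : 0 < x := he.trans_lt hex
    have hcx : c * x ≤ (α + β) * e := le_of_mul_le_mul_right
      (by nlinarith [mul_le_mul_of_nonneg_left hex.le (mul_nonneg hβ he)]) hx
    exact ((le_div_iff₀ hc).2 (by linarith)).trans (le_add_of_nonneg_right he)

section SaddlePoint

variable {W M : Type*} [NormedAddCommGroup W] [InnerProductSpace ℝ W] [FiniteDimensional ℝ W]
  [NormedAddCommGroup M] [InnerProductSpace ℝ M] [FiniteDimensional ℝ M]

theorem LinearMap.exists_apply_eq_mul_norm_le_of_adjoint {c : ℝ} (T : W →ₗ[ℝ] M) (hc : 0 < c)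
    (h : ∀ y, c * ‖y‖ ≤ ‖T.adjoint y‖) (y : M) : ∃ z, T z = y ∧ c * ‖z‖ ≤ ‖y‖ := by
  have hinner : ∀ w w', ⟪T (T.adjoint w), w'⟫ = ⟪T.adjoint w, T.adjoint w'⟫ := fun w w' => by
    rw [← LinearMap.adjoint_inner_right]
  have hinj : Function.Injective (T ∘ₗ T.adjoint) := by
    refine (injective_iff_map_eq_zero _).2 fun w hw => ?_
    have h0 : T.adjoint w = 0 := by
      rw [← inner_self_eq_zero (𝕜 := ℝ), ← hinner, ← LinearMap.comp_apply, hw, inner_zero_left]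
    exact norm_eq_zero.1 (le_antisymm
      ((mul_le_mul_iff_right₀ hc).1 (by simpa [h0] using h w)) (norm_nonneg w))
  obtain ⟨w, rfl⟩ := LinearMap.injective_iff_surjective.1 hinj y
  refine ⟨T.adjoint w, rfl, ?_⟩
  set z := T.adjoint w
  have hz : c * ‖z‖ ^ 2 ≤ ‖z‖ * ‖T z‖ := calc
    c * ‖z‖ ^ 2 = c * ⟪w, T z⟫ := by
      rw [← real_inner_self_eq_norm_sq, ← hinner, real_inner_comm]
    _ ≤ c * (‖w‖ * ‖T z‖) := by gcongr; exact real_inner_le_norm _ _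
    _ ≤ ‖z‖ * ‖T z‖ := by rw [← mul_assoc]; gcongr; exact h w
  show c * ‖z‖ ≤ ‖T z‖
  rcases (norm_nonneg z).eq_or_lt with hz0 | hz0
  · simp [← hz0]
  · exact le_of_mul_le_mul_left (by linarith [show ‖z‖ * (c * ‖z‖) = c * ‖z‖ ^ 2 by ring]) hz0

theorem ContinuousLinearMap.exists_apply_eq_mul_norm_le_of_infSup {c : ℝ}
    (b : W →L[ℝ] M →L[ℝ] ℝ) (hc : 0 < c) (h : ∀ q, c * ‖q‖ ≤ ‖b.flip q‖) (g : M →L[ℝ] ℝ) :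
    ∃ z, b z = g ∧ c * ‖z‖ ≤ ‖g‖ := by
  let T : W →ₗ[ℝ] M :=
    { toFun := fun v => (InnerProductSpace.toDual ℝ M).symm (b v)
      map_add' := fun v w => by simp
      map_smul' := fun r v => by simp }
  have hT : ∀ v q, ⟪T v, q⟫ = b v q := fun v q => InnerProductSpace.toDual_symm_apply
  have hadj : ∀ q, ‖T.adjoint q‖ = ‖b.flip q‖ := fun q => by
    rw [← (InnerProductSpace.toDual ℝ W).norm_map]
    congr 1
    ext v
    rw [InnerProductSpace.toDual_apply_apply, LinearMap.adjoint_inner_left, real_inner_comm, hT,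
      flip_apply]
  obtain ⟨z, hz, hzn⟩ := T.exists_apply_eq_mul_norm_le_of_adjoint hc
    (fun q => (hadj q).symm ▸ h q) ((InnerProductSpace.toDual ℝ M).symm g)
  refine ⟨z, ?_, by simpa using hzn⟩
  ext q
  rw [← hT, hz, InnerProductSpace.toDual_symm_apply]

variable {V : Type*} [NormedAddCommGroup V] [NormedSpace ℝ V]

theorem exists_saddlePoint_stability (a : V →L[ℝ] V →L[ℝ] ℝ) (b₁ : V →L[ℝ] W →L[ℝ] ℝ)
    (b : W →L[ℝ] M →L[ℝ] ℝ) {C₁ C₂ C₃ : ℝ} (hC₁ : 0 < C₁) (hC₂ : 0 < C₂) (hC₃ : 0 < C₃)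
    (hb : ∀ q, C₁ * ‖q‖ ≤ ‖b.flip q‖) (hb₁ : ∀ w, b w = 0 → C₂ * ‖w‖ ≤ ‖b₁.flip w‖)
    (ha : ∀ x, C₃ * ‖x‖ ^ 2 ≤ a x x) :
    ∃ K, 0 ≤ K ∧ ∀ (t : V) (d : W) (r : M) (ε : ℝ), ‖a t + b₁.flip d‖ ≤ ε →
      ‖b₁ t + b.flip r‖ ≤ ε → ‖b d‖ ≤ ε → ‖t‖ + ‖d‖ + ‖r‖ ≤ K * ε := by
  set A := ‖a‖
  set B := ‖b₁‖
  set α := 1 + B / C₁ + A / C₂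
  set β := (1 + B / C₁) / C₂
  set Kt := (α + β) / C₃ + 1
  refine ⟨Kt + (1 + A * Kt + B / C₁) / C₂ + 1 / C₁ + (1 + B * Kt) / C₁, by positivity, ?_⟩
  intro t d r ε h₁ h₂ h₃
  have hε : 0 ≤ ε := (norm_nonneg _).trans h₃
  -- `d = d₀ + z` with `z` carrying `b d` (inf-sup for `b`) and `d₀` in the kernel of `b`, where
  -- the inf-sup condition for `b₁` applies and `b₁ t d₀` is read off the second equation.
  obtain ⟨z, hbz, hzn⟩ := b.exists_apply_eq_mul_norm_le_of_infSup hC₁ hb (b d)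
  set d₀ := d - z
  have hbd₀ : b d₀ = 0 := by simp [d₀, hbz]
  have hz : ‖z‖ ≤ ε / C₁ := by rw [le_div_iff₀ hC₁]; linarith
  have hd₀ : ‖d₀‖ ≤ (ε + A * ‖t‖ + B * (ε / C₁)) / C₂ := by
    rw [le_div_iff₀ hC₂, mul_comm]
    calc C₂ * ‖d₀‖ ≤ ‖b₁.flip d₀‖ := hb₁ d₀ hbd₀
      _ = ‖(a t + b₁.flip d) - a t - b₁.flip z‖ := by simp only [d₀, map_sub]; abel_nf
      _ ≤ ‖a t + b₁.flip d‖ + ‖a t‖ + ‖b₁.flip z‖ :=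
        (norm_sub_le _ _).trans (add_le_add_left (norm_sub_le _ _) _)
      _ ≤ ε + A * ‖t‖ + B * (ε / C₁) := by
        gcongr
        · exact a.le_opNorm t
        · exact (b₁.flip.le_opNorm z).trans (by rw [b₁.opNorm_flip]; gcongr)
  have henergy : C₃ * ‖t‖ ^ 2 ≤ ε * ‖t‖ + ε * ‖d₀‖ + B * ‖t‖ * ‖z‖ := calc
    C₃ * ‖t‖ ^ 2 ≤ a t t := ha t
    _ = (a t + b₁.flip d) t - (b₁ t + b.flip r) d₀ - b₁ t z := by
      simp [d₀, hbz]; ring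
    _ ≤ ‖a t + b₁.flip d‖ * ‖t‖ + ‖b₁ t + b.flip r‖ * ‖d₀‖ + B * ‖t‖ * ‖z‖ := by
      have e₁ := abs_le.1 ((a t + b₁.flip d).le_opNorm t)
      have e₂ := abs_le.1 ((b₁ t + b.flip r).le_opNorm d₀)
      have e₃ := abs_le.1 (b₁.le_opNorm₂ t z)
      linarith [e₁.2, e₂.1, e₃.1]
    _ ≤ ε * ‖t‖ + ε * ‖d₀‖ + B * ‖t‖ * ‖z‖ := by gcongr
  have ht : ‖t‖ ≤ Kt * ε := by
    refine le_of_mul_sq_le_linear hC₃ hε (by positivity) (by positivity) ?_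
    calc C₃ * ‖t‖ ^ 2 ≤ ε * ‖t‖ + ε * ‖d₀‖ + B * ‖t‖ * ‖z‖ := henergy
      _ ≤ ε * ‖t‖ + ε * ((ε + A * ‖t‖ + B * (ε / C₁)) / C₂) + B * ‖t‖ * (ε / C₁) := by gcongr
      _ = α * ε * ‖t‖ + β * ε ^ 2 := by ring
  have hr : ‖r‖ ≤ (ε + B * ‖t‖) / C₁ := by
    rw [le_div_iff₀ hC₁, mul_comm]
    calc C₁ * ‖r‖ ≤ ‖b.flip r‖ := hb r
      _ = ‖(b₁ t + b.flip r) - b₁ t‖ := by rw [add_sub_cancel_left]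
      _ ≤ ‖b₁ t + b.flip r‖ + ‖b₁ t‖ := norm_sub_le _ _
      _ ≤ ε + B * ‖t‖ := by gcongr; exact b₁.le_opNorm t
  have hd : ‖d‖ ≤ ‖d₀‖ + ‖z‖ := norm_le_norm_sub_add d z
  calc ‖t‖ + ‖d‖ + ‖r‖ ≤ ‖t‖ + (‖d₀‖ + ‖z‖) + ‖r‖ := by gcongr
    _ ≤ Kt * ε + ((ε + A * (Kt * ε) + B * (ε / C₁)) / C₂ + ε / C₁) +
        (ε + B * (Kt * ε)) / C₁ := by
      gcongr
      · exact hd₀.trans (by gcongr)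
      · exact hr.trans (by gcongr)
    _ = _ := by ring

end SaddlePoint

section DiscreteError

variable {X₁ X₂ Q : Type*} [NormedAddCommGroup X₁] [NormedSpace ℝ X₁] [NormedAddCommGroup X₂]
  [NormedSpace ℝ X₂] [NormedAddCommGroup Q] [NormedSpace ℝ Q]
  (a : X₁ →L[ℝ] X₁ →L[ℝ] ℝ) (b₁ : X₁ →L[ℝ] X₂ →L[ℝ] ℝ) (b : X₂ →L[ℝ] Q →L[ℝ] ℝ)
  {X1h : Submodule ℝ X₁} {X2h : Submodule ℝ X₂} {Qh : Submodule ℝ Q}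

theorem norm_residual₁_le {θ : X₁} {u : X₂} {θh ξh : X1h} {uh vh : X2h}
    (hc : ∀ ξ, a θ ξ + b₁ ξ u = 0) (hd : ∀ ξh : X1h, a θh ξh + b₁ ξh uh = 0) :
    ‖a.bilinearComp X1h.subtypeL X1h.subtypeL (θh - ξh) +
        (b₁.bilinearComp X1h.subtypeL X2h.subtypeL).flip (uh - vh)‖ ≤
      ‖a‖ * ‖θ - ξh‖ + ‖b₁‖ * ‖u - vh‖ :=
  calc _ = ‖(a (θ - ξh) + b₁.flip (u - vh)).comp X1h.subtypeL‖ := by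
        congr 1; ext η; simp; linarith [hc η, hd η]
    _ ≤ ‖a (θ - ξh)‖ + ‖b₁.flip (u - vh)‖ :=
        (ContinuousLinearMap.norm_comp_subtypeL_le _ _).trans (norm_add_le _ _)
    _ ≤ ‖a‖ * ‖θ - ξh‖ + ‖b₁‖ * ‖u - vh‖ := by
        rw [← b₁.opNorm_flip]; gcongr <;> exact ContinuousLinearMap.le_opNorm _ _

theorem norm_residual₂_le {θ : X₁} {p : Q} {θh ξh : X1h} {ph qh : Qh}
    (hd : ∀ vh : X2h, b₁ θh vh + b vh ph = 0) :
    ‖b₁.bilinearComp X1h.subtypeL X2h.subtypeL (θh - ξh) +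
        (b.bilinearComp X2h.subtypeL Qh.subtypeL).flip (ph - qh)‖ ≤
      ‖(-b₁ θ - b.flip p).comp X2h.subtypeL‖ + ‖b₁‖ * ‖θ - ξh‖ + ‖b‖ * ‖p - qh‖ :=
  calc _ = ‖(-b₁ θ - b.flip p).comp X2h.subtypeL +
        (b₁ (θ - ξh) + b.flip (p - qh)).comp X2h.subtypeL‖ := by
        congr 1; ext v; simp; linarith [hd v]
    _ ≤ ‖(-b₁ θ - b.flip p).comp X2h.subtypeL‖ +
        ‖(b₁ (θ - ξh) + b.flip (p - qh)).comp X2h.subtypeL‖ :=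
        norm_add_le (E := X2h →L[ℝ] ℝ) _ _
    _ ≤ ‖(-b₁ θ - b.flip p).comp X2h.subtypeL‖ + (‖b₁ (θ - ξh)‖ + ‖b.flip (p - qh)‖) := by
        gcongr
        exact (ContinuousLinearMap.norm_comp_subtypeL_le _ _).trans (norm_add_le _ _)
    _ ≤ _ := by
        rw [← add_assoc, ← b.opNorm_flip]; gcongr <;> exact ContinuousLinearMap.le_opNorm _ _

theorem norm_residual₃_le {u : X₂} {uh vh : X2h} (F : Q →L[ℝ] ℝ) (hc : ∀ q, b u q = F q)
    (hd : ∀ qh : Qh, b uh qh = F qh) :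
    ‖b.bilinearComp X2h.subtypeL Qh.subtypeL (uh - vh)‖ ≤ ‖b‖ * ‖u - vh‖ :=
  calc _ = ‖(b (u - vh)).comp Qh.subtypeL‖ := by
        congr 1; ext q; simp [hc, hd]
    _ ≤ ‖b‖ * ‖u - vh‖ :=
        (ContinuousLinearMap.norm_comp_subtypeL_le _ _).trans (ContinuousLinearMap.le_opNorm _ _)

theorem norm_error_le_of_stability {K : ℝ} (hK0 : 0 ≤ K)
    (hK : ∀ (t : X1h) (d : X2h) (r : Qh) (ε : ℝ),
      ‖a.bilinearComp X1h.subtypeL X1h.subtypeL t +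
          (b₁.bilinearComp X1h.subtypeL X2h.subtypeL).flip d‖ ≤ ε →
      ‖b₁.bilinearComp X1h.subtypeL X2h.subtypeL t +
          (b.bilinearComp X2h.subtypeL Qh.subtypeL).flip r‖ ≤ ε →
      ‖b.bilinearComp X2h.subtypeL Qh.subtypeL d‖ ≤ ε → ‖t‖ + ‖d‖ + ‖r‖ ≤ K * ε)
    (F : Q →L[ℝ] ℝ) {θ : X₁} {u : X₂} {p : Q} {θh : X1h} {uh : X2h} {ph : Qh}
    (hc₁ : ∀ ξ, a θ ξ + b₁ ξ u = 0) (hc₃ : ∀ q, b u q = F q)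
    (hd₁ : ∀ ξh : X1h, a θh ξh + b₁ ξh uh = 0) (hd₂ : ∀ vh : X2h, b₁ θh vh + b vh ph = 0)
    (hd₃ : ∀ qh : Qh, b uh qh = F qh) (ξh : X1h) (vh : X2h) (qh : Qh) :
    ‖θ - θh‖ + ‖u - uh‖ + ‖p - ph‖ ≤ (1 + K + K * (‖a‖ + ‖b₁‖ + ‖b‖)) *
      ((‖θ - ξh‖ + ‖u - vh‖ + ‖p - qh‖) + ‖(-b₁ θ - b.flip p).comp X2h.subtypeL‖) := by
  set E := ‖θ - ξh‖ + ‖u - vh‖ + ‖p - qh‖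
  set S := ‖(-b₁ θ - b.flip p).comp X2h.subtypeL‖
  set N := ‖a‖ + ‖b₁‖ + ‖b‖
  have := norm_nonneg a; have := norm_nonneg b₁; have := norm_nonneg b
  have := norm_nonneg (θ - ξh); have := norm_nonneg (u - vh); have := norm_nonneg (p - qh)
  have hS : 0 ≤ S := norm_nonneg (E := X2h →L[ℝ] ℝ) _
  have hstab := hK (θh - ξh) (uh - vh) (ph - qh) (N * E + S)
    ((norm_residual₁_le a b₁ hc₁ hd₁).trans (by nlinarith))
    ((norm_residual₂_le b₁ b (θ := θ) (p := p) hd₂).trans (by nlinarith))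
    ((norm_residual₃_le b F hc₃ hd₃).trans (by nlinarith))
  have h₁ := Submodule.norm_sub_coe_le θ θh ξh
  have h₂ := Submodule.norm_sub_coe_le u uh vh
  have h₃ := Submodule.norm_sub_coe_le p ph qh
  have hE : 0 ≤ E := by positivity
  have hN : 0 ≤ N := by positivity
  nlinarith [mul_nonneg hK0 hE, mul_nonneg (mul_nonneg hK0 hN) hS]

end DiscreteError

theorem strang_lemma_expanded_mixed_general
    {X₁ X₂hat Q : Type*}
    [NormedAddCommGroup X₁] [InnerProductSpace ℝ X₁]
    [NormedAddCommGroup X₂hat] [InnerProductSpace ℝ X₂hat]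
    [NormedAddCommGroup Q] [InnerProductSpace ℝ Q]
    (a : X₁ →L[ℝ] X₁ →L[ℝ] ℝ)
    (b₁ : X₁ →L[ℝ] X₂hat →L[ℝ] ℝ)
    (b : X₂hat →L[ℝ] Q →L[ℝ] ℝ)
    (X₂ : Submodule ℝ X₂hat)
    (X1h : Submodule ℝ X₁) (X2h : Submodule ℝ X₂hat) (Qh : Submodule ℝ Q)
    [FiniteDimensional ℝ X2h] [FiniteDimensional ℝ Qh]
    (C₁ C₂ C₃ C₄ : ℝ) (hC₁ : 0 < C₁) (hC₂ : 0 < C₂) (hC₃ : 0 < C₃)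
    -- (1) discrete inf-sup condition for b
    (hinfsup_b : ∀ qh : Qh,
      C₁ * ‖(qh : Q)‖ ≤
        ⨆ vh : {vh : X2h // vh ≠ 0}, b (vh.1 : X₂hat) (qh : Q) / ‖(vh.1 : X₂hat)‖)
    -- (2) discrete inf-sup condition for b₁ on ker Bh
    (hinfsup_b₁ : ∀ vh : X2h, (∀ qh : Qh, b (vh : X₂hat) (qh : Q) = 0) →
      C₂ * ‖(vh : X₂hat)‖ ≤
        ⨆ ξh : {ξh : X1h // ξh ≠ 0}, b₁ (ξh.1 : X₁) (vh : X₂hat) / ‖(ξh.1 : X₁)‖)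
    -- (3) coercivity and boundedness of a on X1h
    (hcoer : ∀ ξh : X1h,
      C₃ * ‖(ξh : X₁)‖ ^ 2 ≤ a (ξh : X₁) (ξh : X₁) ∧
      a (ξh : X₁) (ξh : X₁) ≤ C₄ * ‖(ξh : X₁)‖ ^ 2) :
    ∃ C > 0, ∀ (F : Q →L[ℝ] ℝ)
      (θ : X₁) (u : X₂hat) (p : Q) (θh : X₁) (uh : X₂hat) (ph : Q),
      -- the continuum solution
      u ∈ X₂ →
      (∀ ξ : X₁, a θ ξ + b₁ ξ u = 0) →
      (∀ v : X₂hat, v ∈ X₂ → b₁ θ v + b v p = 0) →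
      (∀ q : Q, b u q = F q) →
      -- the discrete solution
      θh ∈ X1h → uh ∈ X2h → ph ∈ Qh →
      (∀ ξh : X1h, a θh (ξh : X₁) + b₁ (ξh : X₁) uh = 0) →
      (∀ vh : X2h, b₁ θh (vh : X₂hat) + b (vh : X₂hat) ph = 0) →
      (∀ qh : Qh, b uh (qh : Q) = F (qh : Q)) →
      ‖θ - θh‖ + ‖u - uh‖ + ‖p - ph‖ ≤
        C * ((⨅ w : X1h × X2h × Qh,
                (‖θ - (w.1 : X₁)‖ + ‖u - (w.2.1 : X₂hat)‖ + ‖p - (w.2.2 : Q)‖)) +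
             ⨆ vh : {vh : X2h // vh ≠ 0},
               (-(b₁ θ (vh.1 : X₂hat)) - b (vh.1 : X₂hat) p) / ‖(vh.1 : X₂hat)‖) := by
  obtain ⟨K, hK0, hK⟩ := exists_saddlePoint_stability (a.bilinearComp X1h.subtypeL X1h.subtypeL)
    (b₁.bilinearComp X1h.subtypeL X2h.subtypeL) (b.bilinearComp X2h.subtypeL Qh.subtypeL)
    hC₁ hC₂ hC₃
    (fun q => (hinfsup_b q).trans_eq
      ((b.bilinearComp X2h.subtypeL Qh.subtypeL).flip q).iSup_div_norm_eq_opNorm)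
    (fun v hv => (hinfsup_b₁ v fun q => DFunLike.congr_fun hv q).trans_eq
      ((b₁.bilinearComp X1h.subtypeL X2h.subtypeL).flip v).iSup_div_norm_eq_opNorm)
    (fun ξ => (hcoer ξ).1)
  refine ⟨1 + K + K * (‖a‖ + ‖b₁‖ + ‖b‖), by positivity, ?_⟩
  intro F θ u p θh uh ph _ hc₁ _ hc₃ hθh huh hph hd₁ hd₂ hd₃
  lift θh to X1h using hθh
  lift uh to X2h using huh
  lift ph to Qh using hph
  convert le_mul_ciInf_add (by positivity) fun w : X1h × X2h × Qh =>
    norm_error_le_of_stability a b₁ b hK0 hK F hc₁ hc₃ hd₁ hd₂ hd₃ w.1 w.2.1 w.2.2 using 3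
  exact ((-b₁ θ - b.flip p).comp X2h.subtypeL).iSup_div_norm_eq_opNorm

/-- **Strang-type lemma for the dual-dual (expanded) mixed formulation.**
With `X₂` a closed subspace of the ambient Hilbert space `X̂₂` and
finite-dimensional discrete subspaces `X1h ⊆ X₁`, `X2h ⊆ X̂₂` (possibly
nonconforming) and `Qh ⊆ Q`, under the discrete inf-sup and coercivity
conditions the error of the discrete solution is bounded by a constant
(independent of `F` and of the solutions) times the sum of the
best-approximation error and the consistency error. -/
theorem strang_lemma_expanded_mixed
    {X₁ X₂hat Q : Type*}
    [NormedAddCommGroup X₁] [InnerProductSpace ℝ X₁] [CompleteSpace X₁]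
    [NormedAddCommGroup X₂hat] [InnerProductSpace ℝ X₂hat] [CompleteSpace X₂hat]
    [NormedAddCommGroup Q] [InnerProductSpace ℝ Q] [CompleteSpace Q]
    (a : X₁ →L[ℝ] X₁ →L[ℝ] ℝ)
    (b₁ : X₁ →L[ℝ] X₂hat →L[ℝ] ℝ)
    (b : X₂hat →L[ℝ] Q →L[ℝ] ℝ)
    (X₂ : Submodule ℝ X₂hat) (hX₂closed : IsClosed (X₂ : Set X₂hat))
    (X1h : Submodule ℝ X₁) (X2h : Submodule ℝ X₂hat) (Qh : Submodule ℝ Q)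
    [FiniteDimensional ℝ X1h] [FiniteDimensional ℝ X2h] [FiniteDimensional ℝ Qh]
    (C₁ C₂ C₃ C₄ : ℝ) (hC₁ : 0 < C₁) (hC₂ : 0 < C₂) (hC₃ : 0 < C₃) (hC₄ : 0 < C₄)
    -- (1) discrete inf-sup condition for b
    (hinfsup_b : ∀ qh : Qh,
      C₁ * ‖(qh : Q)‖ ≤
        ⨆ vh : {vh : X2h // vh ≠ 0}, b (vh.1 : X₂hat) (qh : Q) / ‖(vh.1 : X₂hat)‖)
    -- (2) discrete inf-sup condition for b₁ on ker Bh
    (hinfsup_b₁ : ∀ vh : X2h, (∀ qh : Qh, b (vh : X₂hat) (qh : Q) = 0) →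
      C₂ * ‖(vh : X₂hat)‖ ≤
        ⨆ ξh : {ξh : X1h // ξh ≠ 0}, b₁ (ξh.1 : X₁) (vh : X₂hat) / ‖(ξh.1 : X₁)‖)
    -- (3) coercivity and boundedness of a on X1h
    (hcoer : ∀ ξh : X1h,
      C₃ * ‖(ξh : X₁)‖ ^ 2 ≤ a (ξh : X₁) (ξh : X₁) ∧
      a (ξh : X₁) (ξh : X₁) ≤ C₄ * ‖(ξh : X₁)‖ ^ 2) :
    ∃ C > 0, ∀ (F : Q →L[ℝ] ℝ)
      (θ : X₁) (u : X₂hat) (p : Q) (θh : X₁) (uh : X₂hat) (ph : Q),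
      -- the continuum solution
      u ∈ X₂ →
      (∀ ξ : X₁, a θ ξ + b₁ ξ u = 0) →
      (∀ v : X₂hat, v ∈ X₂ → b₁ θ v + b v p = 0) →
      (∀ q : Q, b u q = F q) →
      -- the discrete solution
      θh ∈ X1h → uh ∈ X2h → ph ∈ Qh →
      (∀ ξh : X1h, a θh (ξh : X₁) + b₁ (ξh : X₁) uh = 0) →
      (∀ vh : X2h, b₁ θh (vh : X₂hat) + b (vh : X₂hat) ph = 0) →
      (∀ qh : Qh, b uh (qh : Q) = F (qh : Q)) →
      ‖θ - θh‖ + ‖u - uh‖ + ‖p - ph‖ ≤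
        C * ((⨅ w : X1h × X2h × Qh,
                (‖θ - (w.1 : X₁)‖ + ‖u - (w.2.1 : X₂hat)‖ + ‖p - (w.2.2 : Q)‖)) +
             ⨆ vh : {vh : X2h // vh ≠ 0},
               (-(b₁ θ (vh.1 : X₂hat)) - b (vh.1 : X₂hat) p) / ‖(vh.1 : X₂hat)‖) :=
  strang_lemma_expanded_mixed_general a b₁ b X₂ X1h X2h Qh C₁ C₂ C₃ C₄ hC₁ hC₂ hC₃ hinfsup_b
    hinfsup_b₁ hcoer
end

section
/- Let X₂ ⊆ X̂₂ be a closed subspace and suppose (θ, u, p) ∈ X₁ × X₂ × Q satisfies a(θ, ξ) + b₁(ξ, u) = 0 for all ξ ∈ X₁, b₁(θ, v) + b(v, p) = 0 for all v ∈ X₂, and b(u, q) = F(q) for all q ∈ Q, where F is a continuous linear functional on Q. Let X_{1,h} ⊆ X₁, Q_h ⊆ Q be finite-dimensional subspaces, and let X_{2,h} ⊆ X₂ be a finite-dimensional subspace of the continuum test space (the conforming case). Let (θ_h, u_h, p_h) ∈ X_{1,h} × X_{2,h} × Q_h satisfy a(θ_h, ξ_h) + b₁(ξ_h, u_h) = 0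 for all ξ_h ∈ X_{1,h}, b₁(θ_h, v_h) + b(v_h, p_h) = 0 for all v_h ∈ X_{2,h}, and b(u_h, q_h) = F(q_h) for all q_h ∈ Q_h. Assume the discrete conditions: (1) there is C₁ > 0 with sup over v_h ∈ X_{2,h} \ {0} of b(v_h, q_h)/‖v_h‖ ≥ C₁ ‖q_h‖ for all q_h ∈ Q_h; (2) with ker B_h := {v_h ∈ X_{2,h} : b(v_h, q_h) = 0 for all q_h ∈ Q_h}, there is C₂ > 0 with sup over ξ_h ∈ X_{1,h} \ {0} of b₁(ξ_h, v_h)/‖ξ_h‖ ≥ C₂ ‖v_h‖ for all v_h ∈ ker B_h; (3) there are C₃, C₄ > 0 with C₃ ‖ξ_h‖² ≤ a(ξ_h, ξ_h) ≤ C₄ ‖ξ_h‖² for all ξ_h ∈ X_{1,h}. Then there exists a constant C > 0, depending only on the norms of b₁ and b and on C₁, C₂, C₃, C₄, such that ‖θ − θ_h‖_{X₁} + ‖u − u_h‖_{X̂₂} + ‖p − p_h‖_Q ≤ C inf over (ξ_h, v_h, q_h) ∈ X_{1,h} × X_{2,h} × Q_h of (‖θ − ξ_h‖_{X₁} + ‖u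 − v_h‖_{X̂₂} + ‖p − q_h‖_Q); in particular, the consistency term sup over v_h ∈ X_{2,h} \ {0} of (−b₁(θ, v_h) − b(v_h, p))/‖v_h‖ vanishes. -/
/-!
The three equations are one Petrov–Galerkin problem on `X₁ × X̂₂ × Q` for the bilinear form
`𝓑((θ, u, p), (ξ, v, q)) = a(θ, ξ) + b₁(ξ, u) + b₁(θ, v) + b(v, p) + b(u, q)`, posed on
`V_h = X_{1,h} × X_{2,h} × Q_h`. Since `X_{2,h} ⊆ X₂`, the continuum equations may be tested with
discrete functions, so the error is `𝓑`-orthogonal to `V_h`; this is also why the consistency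
term vanishes. The discrete inf-sup and coercivity conditions force the homogeneous discrete
problem to have only the trivial solution, and as `V_h` is finite-dimensional the injective map
`w ↦ 𝓑(w, ·)|_{V_h}` is bounded below. Céa's argument
`‖x - x_h‖ ≤ ‖x - w_h‖ + ‖x_h - w_h‖ ≲ ‖x - w_h‖` then gives quasi-optimality in the max norm of
the product, which is equivalent to the sum of the three norms.
-/

open ContinuousLinearMap

instance Submodule.finiteDimensional_prod {K V W : Type*} [DivisionRing K] [AddCommGroup V]
    [Module K V] [AddCommGroup W] [Module K W] (p : Submodule K V) (q : Submodule K W)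
    [FiniteDimensional K p] [FiniteDimensional K q] : FiniteDimensional K (p.prod q) := by
  rw [LinearMap.prod_eq_sup_map]
  infer_instance

section Galerkin

variable {E : Type*} [NormedAddCommGroup E] [NormedSpace ℝ E]
  (B : E →L[ℝ] E →L[ℝ] ℝ) (V : Submodule ℝ E)

theorem exists_norm_le_mul_norm_bilinearComp_subtypeL [FiniteDimensional ℝ V]
    (hinj : ∀ w ∈ V, (∀ y ∈ V, B w y = 0) → w = 0) :
    ∃ K : ℝ, 0 ≤ K ∧ ∀ w : V, ‖w‖ ≤ K * ‖B.bilinearComp V.subtypeL V.subtypeL w‖ := by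
  let T : V →ₗ[ℝ] V →L[ℝ] ℝ := (B.bilinearComp V.subtypeL V.subtypeL).toLinearMap
  have hker : LinearMap.ker T = ⊥ := by
    refine LinearMap.ker_eq_bot'.mpr fun w hw => Subtype.ext <| hinj w w.2 fun y hy => ?_
    simpa [T] using congrArg (fun f : V →L[ℝ] ℝ => f ⟨y, hy⟩) hw
  obtain ⟨K, -, hK⟩ :=
    LinearMap.exists_antilipschitzWith (𝕜 := ℝ) (E := V) (F := V →L[ℝ] ℝ) T hker
  refine ⟨K, K.coe_nonneg, fun w => ?_⟩
  have hw := hK.le_mul_norm_sub 0 w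
  simp only [map_zero, neg_zero, zero_add] at hw
  exact hw

variable {B V}

theorem norm_sub_le_of_galerkin_orthogonal {K : ℝ} (hK : 0 ≤ K)
    (hstab : ∀ w : V, ‖w‖ ≤ K * ‖B.bilinearComp V.subtypeL V.subtypeL w‖)
    {x xh w : E} (hxh : xh ∈ V) (hw : w ∈ V) (horth : ∀ y ∈ V, B (x - xh) y = 0) :
    ‖x - xh‖ ≤ (1 + K * ‖B‖) * ‖x - w‖ := by
  have hBe : ‖B.bilinearComp V.subtypeL V.subtypeL (⟨xh, hxh⟩ - ⟨w, hw⟩)‖ ≤ ‖B‖ * ‖x - w‖ := by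
    refine opNorm_le_bound _ (by positivity) fun y => ?_
    have hshift : B (xh - w) y = B (x - w) y := by
      rw [← sub_sub_sub_cancel_left w xh x, map_sub, sub_apply, horth y y.2, sub_zero]
    rw [bilinearComp_apply]
    exact hshift ▸ B.le_opNorm₂ (x - w) y
  calc ‖x - xh‖ ≤ ‖x - w‖ + ‖xh - w‖ := by
        simpa [norm_sub_rev w xh] using norm_sub_le_norm_sub_add_norm_sub x w xh
    _ ≤ ‖x - w‖ + K * (‖B‖ * ‖x - w‖) :=
        add_le_add_right ((hstab _).trans (mul_le_mul_of_nonneg_left hBe hK)) _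
    _ = (1 + K * ‖B‖) * ‖x - w‖ := by ring

theorem exists_norm_sub_le_mul_norm_sub_of_injective [FiniteDimensional ℝ V]
    (hinj : ∀ w ∈ V, (∀ y ∈ V, B w y = 0) → w = 0) :
    ∃ C > 0, ∀ x xh w : E, xh ∈ V → w ∈ V → (∀ y ∈ V, B (x - xh) y = 0) →
      ‖x - xh‖ ≤ C * ‖x - w‖ := by
  obtain ⟨K, hK, hstab⟩ := exists_norm_le_mul_norm_bilinearComp_subtypeL B V hinj
  exact ⟨1 + K * ‖B‖, by positivity, fun _ _ _ hxh hw horth =>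
    norm_sub_le_of_galerkin_orthogonal hK hstab hxh hw horth⟩

end Galerkin

theorem norm_fst_add_norm_fst_snd_add_norm_snd_snd_le {α β γ : Type*} [SeminormedAddGroup α]
    [SeminormedAddGroup β] [SeminormedAddGroup γ] (x : α × β × γ) :
    ‖x.1‖ + ‖x.2.1‖ + ‖x.2.2‖ ≤ 3 * ‖x‖ := by
  have h₁ := norm_fst_le x
  have h₂ := (norm_fst_le x.2).trans (norm_snd_le x)
  have h₃ := (norm_snd_le x.2).trans (norm_snd_le x)
  linarith

theorem norm_le_norm_fst_add_norm_fst_snd_add_norm_snd_snd {α β γ : Type*} [SeminormedAddGroup α]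
    [SeminormedAddGroup β] [SeminormedAddGroup γ] (x : α × β × γ) :
    ‖x‖ ≤ ‖x.1‖ + ‖x.2.1‖ + ‖x.2.2‖ := by
  have := norm_nonneg x.1
  have := norm_nonneg x.2.1
  have := norm_nonneg x.2.2
  exact norm_prod_le_iff.mpr ⟨by linarith, norm_prod_le_iff.mpr ⟨by linarith, by linarith⟩⟩

theorem eq_zero_of_mul_norm_le_iSup {E : Type*} [NormedAddCommGroup E] {ι : Sort*} {C : ℝ}
    (hC : 0 < C) {x : E} {f : ι → ℝ} (hx : C * ‖x‖ ≤ ⨆ i, f i) (hf : ∀ i, f i = 0) : x = 0 := by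
  simp only [hf, Real.iSup_const_zero] at hx
  exact norm_le_zero_iff.mp (nonpos_of_mul_nonpos_right hx hC)

section ExpandedMixed

variable {X₁ X₂hat Q : Type*}
  [NormedAddCommGroup X₁] [NormedSpace ℝ X₁] [NormedAddCommGroup X₂hat] [NormedSpace ℝ X₂hat]
  [NormedAddCommGroup Q] [NormedSpace ℝ Q]
  (a : X₁ →L[ℝ] X₁ →L[ℝ] ℝ) (b₁ : X₁ →L[ℝ] X₂hat →L[ℝ] ℝ) (b : X₂hat →L[ℝ] Q →L[ℝ] ℝ)

noncomputable def expandedMixedForm : (X₁ × X₂hat × Q) →L[ℝ] (X₁ × X₂hat × Q) →L[ℝ] ℝ :=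
  let π₁ := ContinuousLinearMap.fst ℝ X₁ (X₂hat × Q)
  let π₂ := (ContinuousLinearMap.fst ℝ X₂hat Q).comp (ContinuousLinearMap.snd ℝ X₁ (X₂hat × Q))
  let π₃ := (ContinuousLinearMap.snd ℝ X₂hat Q).comp (ContinuousLinearMap.snd ℝ X₁ (X₂hat × Q))
  a.bilinearComp π₁ π₁ + b₁.flip.bilinearComp π₂ π₁ + b₁.bilinearComp π₁ π₂ +
    b.flip.bilinearComp π₃ π₂ + b.bilinearComp π₂ π₃

theorem expandedMixedForm_apply (x y : X₁ × X₂hat × Q) :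
    expandedMixedForm a b₁ b x y =
      a x.1 y.1 + b₁ y.1 x.2.1 + (b₁ x.1 y.2.1 + b y.2.1 x.2.2) + b x.2.1 y.2.2 := by
  simp only [expandedMixedForm, add_apply, bilinearComp_apply, flip_apply, coe_fst', coe_snd',
    coe_comp, Function.comp_apply]
  ring

variable {a b₁ b} {X1h : Submodule ℝ X₁} {X2h : Submodule ℝ X₂hat} {Qh : Submodule ℝ Q}

theorem expandedMixed_homogeneous_eq_zero {C₁ C₂ C₃ : ℝ}
    (hC₁ : 0 < C₁) (hC₂ : 0 < C₂) (hC₃ : 0 < C₃)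
    (hinfsup_b : ∀ qh : Qh,
      C₁ * ‖(qh : Q)‖ ≤
        ⨆ vh : {vh : X2h // vh ≠ 0}, b (vh.1 : X₂hat) (qh : Q) / ‖(vh.1 : X₂hat)‖)
    (hinfsup_b₁ : ∀ vh : X2h, (∀ qh : Qh, b (vh : X₂hat) (qh : Q) = 0) →
      C₂ * ‖(vh : X₂hat)‖ ≤
        ⨆ ξh : {ξh : X1h // ξh ≠ 0}, b₁ (ξh.1 : X₁) (vh : X₂hat) / ‖(ξh.1 : X₁)‖)
    (hcoer : ∀ ξh : X1h, C₃ * ‖(ξh : X₁)‖ ^ 2 ≤ a (ξh : X₁) (ξh : X₁))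
    {θ : X1h} {u : X2h} {p : Qh}
    (h₁ : ∀ ξ : X1h, a θ ξ + b₁ ξ u = 0) (h₂ : ∀ v : X2h, b₁ θ v + b v p = 0)
    (h₃ : ∀ q : Qh, b u q = 0) :
    θ = 0 ∧ u = 0 ∧ p = 0 := by
  have hθ : θ = 0 := by
    have haθ : a θ θ = 0 := by linarith [h₁ θ, h₂ u, h₃ p]
    have hn : ‖(θ : X₁)‖ ^ 2 ≤ 0 := nonpos_of_mul_nonpos_right (haθ ▸ hcoer θ) hC₃
    exact Subtype.ext <| norm_eq_zero.mp <| pow_eq_zero_iff two_ne_zero |>.mp <|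
      le_antisymm hn (sq_nonneg _)
  subst hθ
  have hu : ∀ ξ : X1h, b₁ ξ u = 0 := fun ξ => by simpa using h₁ ξ
  have hp : ∀ v : X2h, b v p = 0 := fun v => by simpa using h₂ v
  refine ⟨rfl, Subtype.ext ?_, Subtype.ext ?_⟩
  · exact eq_zero_of_mul_norm_le_iSup hC₂ (hinfsup_b₁ u h₃) fun ξ => by rw [hu, zero_div]
  · exact eq_zero_of_mul_norm_le_iSup hC₁ (hinfsup_b p) fun v => by rw [hp, zero_div]

theorem expandedMixedForm_eq_zero_of_forall_apply_eq_zero {C₁ C₂ C₃ : ℝ}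
    (hC₁ : 0 < C₁) (hC₂ : 0 < C₂) (hC₃ : 0 < C₃)
    (hinfsup_b : ∀ qh : Qh,
      C₁ * ‖(qh : Q)‖ ≤
        ⨆ vh : {vh : X2h // vh ≠ 0}, b (vh.1 : X₂hat) (qh : Q) / ‖(vh.1 : X₂hat)‖)
    (hinfsup_b₁ : ∀ vh : X2h, (∀ qh : Qh, b (vh : X₂hat) (qh : Q) = 0) →
      C₂ * ‖(vh : X₂hat)‖ ≤
        ⨆ ξh : {ξh : X1h // ξh ≠ 0}, b₁ (ξh.1 : X₁) (vh : X₂hat) / ‖(ξh.1 : X₁)‖)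
    (hcoer : ∀ ξh : X1h, C₃ * ‖(ξh : X₁)‖ ^ 2 ≤ a (ξh : X₁) (ξh : X₁)) :
    ∀ w ∈ X1h.prod (X2h.prod Qh),
      (∀ y ∈ X1h.prod (X2h.prod Qh), expandedMixedForm a b₁ b w y = 0) → w = 0 := by
  rintro ⟨θ, u, p⟩ ⟨hθ, hu, hp⟩ hw
  have hwy (y) (hy : y ∈ X1h.prod (X2h.prod Qh)) :=
    expandedMixedForm_apply a b₁ b (θ, u, p) y ▸ hw y hy
  obtain ⟨h₁, h₂, h₃⟩ := expandedMixed_homogeneous_eq_zero (θ := ⟨θ, hθ⟩) (u := ⟨u, hu⟩)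
    (p := ⟨p, hp⟩) hC₁ hC₂ hC₃ hinfsup_b hinfsup_b₁ hcoer
    (fun ξ => by simpa using hwy (ξ, 0, 0) ⟨ξ.2, zero_mem _, zero_mem _⟩)
    (fun v => by simpa using hwy (0, v, 0) ⟨zero_mem _, v.2, zero_mem _⟩)
    (fun q => by simpa using hwy (0, 0, q) ⟨zero_mem _, zero_mem _, q.2⟩)
  simp only [Submodule.mk_eq_zero] at h₁ h₂ h₃
  simp only [h₁, h₂, h₃, Prod.mk_zero_zero]

theorem expandedMixedForm_galerkin_orthogonal (F : Q →L[ℝ] ℝ) {θ θh : X₁} {u uh : X₂hat} {p ph : Q}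
    (hc1 : ∀ ξ : X₁, a θ ξ + b₁ ξ u = 0) (hc2 : ∀ v ∈ X2h, b₁ θ v + b v p = 0)
    (hc3 : ∀ q : Q, b u q = F q)
    (hd1 : ∀ ξh : X1h, a θh (ξh : X₁) + b₁ (ξh : X₁) uh = 0)
    (hd2 : ∀ vh : X2h, b₁ θh (vh : X₂hat) + b (vh : X₂hat) ph = 0)
    (hd3 : ∀ qh : Qh, b uh (qh : Q) = F (qh : Q)) :
    ∀ y ∈ X1h.prod (X2h.prod Qh), expandedMixedForm a b₁ b ((θ, u, p) - (θh, uh, ph)) y = 0 := by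
  rintro ⟨ξ, v, q⟩ ⟨hξ, hv, hq⟩
  have e₁ : a θh ξ + b₁ ξ uh = 0 := hd1 ⟨ξ, hξ⟩
  have e₂ : b₁ θh v + b v ph = 0 := hd2 ⟨v, hv⟩
  have e₃ : b uh q = F q := hd3 ⟨q, hq⟩
  rw [map_sub, sub_apply, expandedMixedForm_apply, expandedMixedForm_apply]
  linarith [hc1 ξ, hc2 v hv, hc3 q]

end ExpandedMixed

theorem cea_estimate_conforming_expanded_mixed_general
    {X₁ X₂hat Q : Type*}
    [NormedAddCommGroup X₁] [InnerProductSpace ℝ X₁]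
    [NormedAddCommGroup X₂hat] [InnerProductSpace ℝ X₂hat]
    [NormedAddCommGroup Q] [InnerProductSpace ℝ Q]
    (a : X₁ →L[ℝ] X₁ →L[ℝ] ℝ)
    (b₁ : X₁ →L[ℝ] X₂hat →L[ℝ] ℝ)
    (b : X₂hat →L[ℝ] Q →L[ℝ] ℝ)
    (X₂ : Submodule ℝ X₂hat)
    (X1h : Submodule ℝ X₁) (X2h : Submodule ℝ X₂hat) (Qh : Submodule ℝ Q)
    [FiniteDimensional ℝ X1h] [FiniteDimensional ℝ X2h] [FiniteDimensional ℝ Qh]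
    -- conforming case: the discrete velocity space lies in the continuum one
    (hconf : X2h ≤ X₂)
    (C₁ C₂ C₃ C₄ : ℝ) (hC₁ : 0 < C₁) (hC₂ : 0 < C₂) (hC₃ : 0 < C₃)
    -- (1) discrete inf-sup condition for b
    (hinfsup_b : ∀ qh : Qh,
      C₁ * ‖(qh : Q)‖ ≤
        ⨆ vh : {vh : X2h // vh ≠ 0}, b (vh.1 : X₂hat) (qh : Q) / ‖(vh.1 : X₂hat)‖)
    -- (2) discrete inf-sup condition for b₁ on ker Bh
    (hinfsup_b₁ : ∀ vh : X2h, (∀ qh : Qh, b (vh : X₂hat) (qh : Q) = 0) →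
      C₂ * ‖(vh : X₂hat)‖ ≤
        ⨆ ξh : {ξh : X1h // ξh ≠ 0}, b₁ (ξh.1 : X₁) (vh : X₂hat) / ‖(ξh.1 : X₁)‖)
    -- (3) coercivity and boundedness of a on X1h
    (hcoer : ∀ ξh : X1h,
      C₃ * ‖(ξh : X₁)‖ ^ 2 ≤ a (ξh : X₁) (ξh : X₁) ∧
      a (ξh : X₁) (ξh : X₁) ≤ C₄ * ‖(ξh : X₁)‖ ^ 2) :
    ∃ C > 0, ∀ (F : Q →L[ℝ] ℝ)
      (θ : X₁) (u : X₂hat) (p : Q) (θh : X₁) (uh : X₂hat) (ph : Q),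
      -- the continuum solution
      u ∈ X₂ →
      (∀ ξ : X₁, a θ ξ + b₁ ξ u = 0) →
      (∀ v : X₂hat, v ∈ X₂ → b₁ θ v + b v p = 0) →
      (∀ q : Q, b u q = F q) →
      -- the discrete solution
      θh ∈ X1h → uh ∈ X2h → ph ∈ Qh →
      (∀ ξh : X1h, a θh (ξh : X₁) + b₁ (ξh : X₁) uh = 0) →
      (∀ vh : X2h, b₁ θh (vh : X₂hat) + b (vh : X₂hat) ph = 0) →
      (∀ qh : Qh, b uh (qh : Q) = F (qh : Q)) →
      (‖θ - θh‖ + ‖u - uh‖ + ‖p - ph‖ ≤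
        C * ⨅ w : X1h × X2h × Qh,
              (‖θ - (w.1 : X₁)‖ + ‖u - (w.2.1 : X₂hat)‖ + ‖p - (w.2.2 : Q)‖)) ∧
      (⨆ vh : {vh : X2h // vh ≠ 0},
          (-(b₁ θ (vh.1 : X₂hat)) - b (vh.1 : X₂hat) p) / ‖(vh.1 : X₂hat)‖) = 0 := by
  obtain ⟨C, hC, hcea⟩ := exists_norm_sub_le_mul_norm_sub_of_injective
    (B := expandedMixedForm a b₁ b) <| expandedMixedForm_eq_zero_of_forall_apply_eq_zero
      hC₁ hC₂ hC₃ hinfsup_b hinfsup_b₁ fun ξh => (hcoer ξh).1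
  refine ⟨3 * C, by positivity,
    fun F θ u p θh uh ph _ hc1 hc2 hc3 hθh huh hph hd1 hd2 hd3 => ⟨?_, ?_⟩⟩
  · rw [mul_assoc, Real.mul_iInf_of_nonneg hC.le, Real.mul_iInf_of_nonneg zero_le_three]
    refine le_ciInf fun w => ?_
    have horth := expandedMixedForm_galerkin_orthogonal F hc1 (fun v hv => hc2 v (hconf hv))
      hc3 hd1 hd2 hd3
    calc ‖θ - θh‖ + ‖u - uh‖ + ‖p - ph‖ ≤ 3 * ‖(θ, u, p) - (θh, uh, ph)‖ :=
          norm_fst_add_norm_fst_snd_add_norm_snd_snd_le ((θ, u, p) - (θh, uh, ph))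
      _ ≤ 3 * (C * ‖(θ, u, p) - ((w.1 : X₁), (w.2.1 : X₂hat), (w.2.2 : Q))‖) := by
          gcongr
          exact hcea _ _ _ ⟨hθh, huh, hph⟩ ⟨w.1.2, w.2.1.2, w.2.2.2⟩ horth
      _ ≤ _ := by
          gcongr
          exact norm_le_norm_fst_add_norm_fst_snd_add_norm_snd_snd _
  · have hzero : ∀ vh : {vh : X2h // vh ≠ 0},
        (-(b₁ θ (vh.1 : X₂hat)) - b (vh.1 : X₂hat) p) / ‖(vh.1 : X₂hat)‖ = 0 := fun vh =>
      div_eq_zero_iff.mpr <| Or.inl <| by linarith [hc2 _ (hconf vh.1.2)]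
    simp only [hzero, Real.iSup_const_zero]

/-- **Céa-type quasi-optimality estimate for the conforming expanded mixed method.**
When the discrete velocity space `X2h` is contained in the continuum test
space `X₂` (conforming case), the error of the discrete solution is bounded by
a constant times the best-approximation error alone; in particular the
consistency term vanishes. -/
theorem cea_estimate_conforming_expanded_mixed
    {X₁ X₂hat Q : Type*}
    [NormedAddCommGroup X₁] [InnerProductSpace ℝ X₁] [CompleteSpace X₁]
    [NormedAddCommGroup X₂hat] [InnerProductSpace ℝ X₂hat] [CompleteSpace X₂hat]
    [NormedAddCommGroup Q] [InnerProductSpace ℝ Q] [CompleteSpace Q]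
    (a : X₁ →L[ℝ] X₁ →L[ℝ] ℝ)
    (b₁ : X₁ →L[ℝ] X₂hat →L[ℝ] ℝ)
    (b : X₂hat →L[ℝ] Q →L[ℝ] ℝ)
    (X₂ : Submodule ℝ X₂hat) (hX₂closed : IsClosed (X₂ : Set X₂hat))
    (X1h : Submodule ℝ X₁) (X2h : Submodule ℝ X₂hat) (Qh : Submodule ℝ Q)
    [FiniteDimensional ℝ X1h] [FiniteDimensional ℝ X2h] [FiniteDimensional ℝ Qh]
    -- conforming case: the discrete velocity space lies in the continuum one
    (hconf : X2h ≤ X₂)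
    (C₁ C₂ C₃ C₄ : ℝ) (hC₁ : 0 < C₁) (hC₂ : 0 < C₂) (hC₃ : 0 < C₃) (hC₄ : 0 < C₄)
    -- (1) discrete inf-sup condition for b
    (hinfsup_b : ∀ qh : Qh,
      C₁ * ‖(qh : Q)‖ ≤
        ⨆ vh : {vh : X2h // vh ≠ 0}, b (vh.1 : X₂hat) (qh : Q) / ‖(vh.1 : X₂hat)‖)
    -- (2) discrete inf-sup condition for b₁ on ker Bh
    (hinfsup_b₁ : ∀ vh : X2h, (∀ qh : Qh, b (vh : X₂hat) (qh : Q) = 0) →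
      C₂ * ‖(vh : X₂hat)‖ ≤
        ⨆ ξh : {ξh : X1h // ξh ≠ 0}, b₁ (ξh.1 : X₁) (vh : X₂hat) / ‖(ξh.1 : X₁)‖)
    -- (3) coercivity and boundedness of a on X1h
    (hcoer : ∀ ξh : X1h,
      C₃ * ‖(ξh : X₁)‖ ^ 2 ≤ a (ξh : X₁) (ξh : X₁) ∧
      a (ξh : X₁) (ξh : X₁) ≤ C₄ * ‖(ξh : X₁)‖ ^ 2) :
    ∃ C > 0, ∀ (F : Q →L[ℝ] ℝ)
      (θ : X₁) (u : X₂hat) (p : Q) (θh : X₁) (uh : X₂hat) (ph : Q),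
      -- the continuum solution
      u ∈ X₂ →
      (∀ ξ : X₁, a θ ξ + b₁ ξ u = 0) →
      (∀ v : X₂hat, v ∈ X₂ → b₁ θ v + b v p = 0) →
      (∀ q : Q, b u q = F q) →
      -- the discrete solution
      θh ∈ X1h → uh ∈ X2h → ph ∈ Qh →
      (∀ ξh : X1h, a θh (ξh : X₁) + b₁ (ξh : X₁) uh = 0) →
      (∀ vh : X2h, b₁ θh (vh : X₂hat) + b (vh : X₂hat) ph = 0) →
      (∀ qh : Qh, b uh (qh : Q) = F (qh : Q)) →
      (‖θ - θh‖ + ‖u - uh‖ + ‖p - ph‖ ≤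
        C * ⨅ w : X1h × X2h × Qh,
              (‖θ - (w.1 : X₁)‖ + ‖u - (w.2.1 : X₂hat)‖ + ‖p - (w.2.2 : Q)‖)) ∧
      (⨆ vh : {vh : X2h // vh ≠ 0},
          (-(b₁ θ (vh.1 : X₂hat)) - b (vh.1 : X₂hat) p) / ‖(vh.1 : X₂hat)‖) = 0 :=
  cea_estimate_conforming_expanded_mixed_general a b₁ b X₂ X1h X2h Qh hconf C₁ C₂ C₃ C₄ hC₁ hC₂ hC₃
    hinfsup_b hinfsup_b₁ hcoer
end

section
/- Let X₂ and Q be real normed vector spaces and b : X₂ × Q → ℝ a bounded bilinear form. Let Q_h ⊆ Q be a subspace, let V_h and W_h be subspaces of X₂, and let M : V_h → W_h be a linear map such that b(M v, q_h) = b(v, q_h) for all v ∈ V_h and all q_h ∈ Q_h, and such that there is a constant C₀ > 0 with ‖M v‖_{X₂} ≤ C₀ ‖v‖_{X₂} for all v ∈ V_h. Suppose there is a constant C* > 0 such that for every q_h ∈ Q_h, sup over v ∈ V_h \ {0} of b(v, q_h)/‖v‖_{X₂} ≥ C* ‖q_h‖_Q. Then for every q_h ∈ Q_h, sup over w ∈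 W_h \ {0} of b(w, q_h)/‖w‖_{X₂} ≥ (C*/C₀) ‖q_h‖_Q. -/
/-!
The supremum in an inf-sup condition over a subspace is the operator norm of the functional
`b (·) q_h` restricted to that subspace. Since this restriction to `V_h` factors through `M`, its
norm is at most `C₀` times the norm of the restriction to `W_h`.
-/

open Set

namespace ContinuousLinearMap

section Real

variable {E : Type*} [NormedAddCommGroup E] [NormedSpace ℝ E]

theorem bddAbove_range_apply_div_norm (f : E →L[ℝ] ℝ) :
    BddAbove (range fun x : {x : E // x ≠ 0} => f x / ‖(x : E)‖) := by
  refine ⟨‖f‖, ?_⟩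
  rintro _ ⟨x, rfl⟩
  rw [div_le_iff₀ (norm_pos_iff.2 x.2)]
  exact (le_abs_self _).trans (f.le_opNorm x)

theorem apply_le_iSup_apply_div_norm_mul_norm (f : E →L[ℝ] ℝ) (x : E) :
    f x ≤ (⨆ y : {y : E // y ≠ 0}, f y / ‖(y : E)‖) * ‖x‖ := by
  rcases eq_or_ne x 0 with rfl | hx
  · simp
  rw [← div_le_iff₀ (norm_pos_iff.2 hx)]
  exact le_ciSup (f := fun y : {y : E // y ≠ 0} => f y / ‖(y : E)‖)
    (bddAbove_range_apply_div_norm f) ⟨x, hx⟩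

/-- Since `f (-x) = - f x`, the signed quotients already reach the operator norm. -/
theorem iSup_apply_div_norm_eq_norm (f : E →L[ℝ] ℝ) :
    ⨆ x : {x : E // x ≠ 0}, f x / ‖(x : E)‖ = ‖f‖ := by
  set S := ⨆ x : {x : E // x ≠ 0}, f x / ‖(x : E)‖
  have habs (x : E) : |f x| ≤ S * ‖x‖ :=
    abs_le'.2 ⟨apply_le_iSup_apply_div_norm_mul_norm f x,
      by simpa using apply_le_iSup_apply_div_norm_mul_norm f (-x)⟩
  have hS : 0 ≤ S := by
    rcases isEmpty_or_nonempty {x : E // x ≠ 0} with hE | ⟨x, hx⟩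
    · exact (Real.iSup_of_isEmpty _).ge
    · have hpos := norm_pos_iff.2 hx
      exact le_of_mul_le_mul_right (by simpa using (abs_nonneg _).trans (habs x)) hpos
  refine le_antisymm (Real.iSup_le (fun x => ?_) (norm_nonneg f)) (f.opNorm_le_bound hS habs)
  rw [div_le_iff₀ (norm_pos_iff.2 x.2)]
  exact (le_abs_self _).trans (f.le_opNorm x)

end Real

theorem norm_le_mul_norm_of_apply_eq_comp {𝕜 E F G : Type*} [NontriviallyNormedField 𝕜]
    [SeminormedAddCommGroup E] [SeminormedAddCommGroup F] [SeminormedAddCommGroup G]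
    [NormedSpace 𝕜 E] [NormedSpace 𝕜 F] [NormedSpace 𝕜 G]
    (f : E →L[𝕜] G) (g : F →L[𝕜] G) (M : E →ₗ[𝕜] F) (hfg : ∀ x, g (M x) = f x)
    {C : ℝ} (hC : 0 ≤ C) (hM : ∀ x, ‖M x‖ ≤ C * ‖x‖) :
    ‖f‖ ≤ C * ‖g‖ :=
  f.opNorm_le_bound (by positivity) fun x =>
    calc ‖f x‖ = ‖g (M x)‖ := by rw [hfg]
      _ ≤ ‖g‖ * ‖M x‖ := g.le_opNorm _
      _ ≤ ‖g‖ * (C * ‖x‖) := by gcongr; exact hM x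
      _ = C * ‖g‖ * ‖x‖ := by ring

end ContinuousLinearMap

open ContinuousLinearMap

theorem infsup_transfer_general
    {X₂ Q : Type*}
    [NormedAddCommGroup X₂] [NormedSpace ℝ X₂]
    [NormedAddCommGroup Q] [NormedSpace ℝ Q]
    (b : X₂ →L[ℝ] Q →L[ℝ] ℝ)
    (Qh : Submodule ℝ Q) (Vh Wh : Submodule ℝ X₂)
    (M : Vh →ₗ[ℝ] Wh)
    (hMb : ∀ (v : Vh) (qh : Qh), b ((M v : Wh) : X₂) (qh : Q) = b (v : X₂) (qh : Q))
    (C₀ : ℝ) (hC₀ : 0 < C₀)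
    (hMbound : ∀ v : Vh, ‖((M v : Wh) : X₂)‖ ≤ C₀ * ‖(v : X₂)‖)
    (Cstar : ℝ)
    (hinfsup : ∀ qh : Qh,
      Cstar * ‖(qh : Q)‖ ≤
        ⨆ v : {v : Vh // v ≠ 0}, b (v.1 : X₂) (qh : Q) / ‖(v.1 : X₂)‖) :
    ∀ qh : Qh,
      (Cstar / C₀) * ‖(qh : Q)‖ ≤
        ⨆ w : {w : Wh // w ≠ 0}, b (w.1 : X₂) (qh : Q) / ‖(w.1 : X₂)‖ := by
  intro qh
  have hV : Cstar * ‖(qh : Q)‖ ≤ ‖(b.flip qh).comp Vh.subtypeL‖ :=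
    (hinfsup qh).trans_eq (iSup_apply_div_norm_eq_norm ((b.flip qh).comp Vh.subtypeL))
  have hVW : ‖(b.flip qh).comp Vh.subtypeL‖ ≤ C₀ * ‖(b.flip qh).comp Wh.subtypeL‖ :=
    norm_le_mul_norm_of_apply_eq_comp _ _ M (fun v => hMb v qh) hC₀.le hMbound
  refine le_of_le_of_eq ?_ (iSup_apply_div_norm_eq_norm ((b.flip qh).comp Wh.subtypeL)).symm
  rw [div_mul_eq_mul_div, div_le_iff₀ hC₀, mul_comm _ C₀]
  exact hV.trans hVW

/-- **Inf-sup transfer to the multiscale velocity space.**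
If `M : Vh → Wh` is a linear map preserving the bilinear form `b` against all
discrete pressures in `Qh` and bounded with constant `C₀`, then an inf-sup
condition with constant `C*` for `(Vh, Qh)` transfers to an inf-sup condition
with constant `C*/C₀` for `(Wh, Qh)`. -/
theorem infsup_transfer
    {X₂ Q : Type*}
    [NormedAddCommGroup X₂] [NormedSpace ℝ X₂]
    [NormedAddCommGroup Q] [NormedSpace ℝ Q]
    (b : X₂ →L[ℝ] Q →L[ℝ] ℝ)
    (Qh : Submodule ℝ Q) (Vh Wh : Submodule ℝ X₂)
    (M : Vh →ₗ[ℝ] Wh)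
    (hMb : ∀ (v : Vh) (qh : Qh), b ((M v : Wh) : X₂) (qh : Q) = b (v : X₂) (qh : Q))
    (C₀ : ℝ) (hC₀ : 0 < C₀)
    (hMbound : ∀ v : Vh, ‖((M v : Wh) : X₂)‖ ≤ C₀ * ‖(v : X₂)‖)
    (Cstar : ℝ) (hCstar : 0 < Cstar)
    (hinfsup : ∀ qh : Qh,
      Cstar * ‖(qh : Q)‖ ≤
        ⨆ v : {v : Vh // v ≠ 0}, b (v.1 : X₂) (qh : Q) / ‖(v.1 : X₂)‖) :
    ∀ qh : Qh,
      (Cstar / C₀) * ‖(qh : Q)‖ ≤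
        ⨆ w : {w : Wh // w ≠ 0}, b (w.1 : X₂) (qh : Q) / ‖(w.1 : X₂)‖ :=
  infsup_transfer_general b Qh Vh Wh M hMb C₀ hC₀ hMbound Cstar hinfsup
end

section
/- Let X₁, X̃₂, Q, Π be finite-dimensional real vector spaces, let a : X₁ × X₁ → ℝ, b₁ : X₁ × X̃₂ → ℝ, b : X̃₂ × Q → ℝ, c : X̃₂ × Π → ℝ be bilinear forms, and let F : Q → ℝ be a linear functional. Assume c is nondegenerate in its second variable, i.e., if π ∈ Π satisfies c(τ, π) = 0 for all τ ∈ X̃₂, then π = 0. Define X₂ := {v ∈ X̃₂ : c(v, π) = 0 for all π ∈ Π}. Suppose the non-hybrid problem has a unique solution, i.e., there is exactly one triple (θ, u, p) ∈ X₁ × X₂ × Q with a(θ, ξ) + b₁(ξ, u) = 0 for all ξ ∈ X₁, b₁(θ, v) + b(v, p) = 0 for all v ∈ X₂, and b(u, q) = F(q) for all q ∈ Q. Then the hybrid problem has a unique solution: there is exactly one quadruple (θ̄, ū, p̄, λ) ∈ X₁ × X̃₂ × Q × Π with a(θ̄, ξ) + b₁(ξ, ū) = 0 for all ξ ∈ X₁,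 b₁(θ̄, τ) + b(τ, p̄) = c(τ, λ) for all τ ∈ X̃₂, b(ū, q) = F(q) for all q ∈ Q, and c(ū, π) = 0 for all π ∈ Π. Moreover, (θ̄, ū, p̄) = (θ, u, p). -/
/-!
The hybrid problem tested with a velocity in the kernel `X₂` of the interface pairing is the
non-hybrid problem, so every hybrid solution restricts to the unique non-hybrid one. Conversely,
the residual `τ ↦ b₁(θ, τ) + b(τ, p)` of the non-hybrid solution vanishes on `X₂ = ker c`; in
finite dimension the annihilator of `ker c` is the range of `π ↦ c(·, π)`, which produces the
multiplier, and nondegeneracy of `c` in its second variable makes it unique.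
-/

open LinearMap

section Hybridization

variable {K X₁ X₂t Q P : Type*} [Field K]
  [AddCommGroup X₁] [Module K X₁] [AddCommGroup X₂t] [Module K X₂t]
  [AddCommGroup Q] [Module K Q] [AddCommGroup P] [Module K P]
  (a : X₁ →ₗ[K] X₁ →ₗ[K] K) (b₁ : X₁ →ₗ[K] X₂t →ₗ[K] K) (b : X₂t →ₗ[K] Q →ₗ[K] K)
  (c : X₂t →ₗ[K] P →ₗ[K] K) (F : Q →ₗ[K] K)

def IsNonhybridSolution (θ : X₁) (u : X₂t) (p : Q) : Prop :=
  (∀ π : P, c u π = 0) ∧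
  (∀ ξ : X₁, a θ ξ + b₁ ξ u = 0) ∧
  (∀ v : X₂t, (∀ π : P, c v π = 0) → b₁ θ v + b v p = 0) ∧
  (∀ q : Q, b u q = F q)

def IsHybridSolution (θ : X₁) (u : X₂t) (p : Q) (lam : P) : Prop :=
  (∀ ξ : X₁, a θ ξ + b₁ ξ u = 0) ∧
  (∀ τ : X₂t, b₁ θ τ + b τ p = c τ lam) ∧
  (∀ q : Q, b u q = F q) ∧
  (∀ π : P, c u π = 0)

variable {a b₁ b c F} {θ : X₁} {u : X₂t} {p : Q} {lam : P}

theorem IsHybridSolution.isNonhybridSolution (h : IsHybridSolution a b₁ b c F θ u p lam) :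
    IsNonhybridSolution a b₁ b c F θ u p := by
  obtain ⟨hθ, hp, hF, hu⟩ := h
  exact ⟨hu, hθ, fun v hv => by rw [hp v, hv lam], hF⟩

theorem IsNonhybridSolution.exists_isHybridSolution [Module.IsReflexive K P]
    (h : IsNonhybridSolution a b₁ b c F θ u p) : ∃ lam, IsHybridSolution a b₁ b c F θ u p lam := by
  obtain ⟨hu, hθ, hp, hF⟩ := h
  have hres : b₁ θ + b.flip p ∈ range c.flip := by
    rw [← dualAnnihilator_ker_eq_range_flip, Submodule.mem_dualAnnihilator]
    intro v hv
    exact hp v fun π => congr($(mem_ker.mp hv) π)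
  obtain ⟨lam, hlam⟩ := hres
  exact ⟨lam, hθ, fun τ => congr($hlam τ).symm, hF, hu⟩

theorem IsHybridSolution.multiplier_unique (hc : c.SeparatingRight) {lam' : P}
    (h : IsHybridSolution a b₁ b c F θ u p lam) (h' : IsHybridSolution a b₁ b c F θ u p lam') :
    lam = lam' := by
  have hflip : Function.Injective c.flip :=
    ker_eq_bot.mp (separatingRight_iff_flip_ker_eq_bot.mp hc)
  exact hflip <| ext fun τ => (h.2.1 τ).symm.trans (h'.2.1 τ)

end Hybridization

theorem hybridization_equivalence_general
    {X₁ X₂t Q P : Type*}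
    [AddCommGroup X₁] [Module ℝ X₁]
    [AddCommGroup X₂t] [Module ℝ X₂t]
    [AddCommGroup Q] [Module ℝ Q]
    [AddCommGroup P] [Module ℝ P] [FiniteDimensional ℝ P]
    (a : X₁ →ₗ[ℝ] X₁ →ₗ[ℝ] ℝ)
    (b₁ : X₁ →ₗ[ℝ] X₂t →ₗ[ℝ] ℝ)
    (b : X₂t →ₗ[ℝ] Q →ₗ[ℝ] ℝ)
    (c : X₂t →ₗ[ℝ] P →ₗ[ℝ] ℝ)
    (F : Q →ₗ[ℝ] ℝ)
    (hnondeg : ∀ π : P, (∀ τ : X₂t, c τ π = 0) → π = 0)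
    -- the non-hybrid problem has a unique solution (with velocity in
    -- X₂ := {v : X₂t | ∀ π, c v π = 0})
    (hnonhybrid : ∃! s : X₁ × X₂t × Q,
      (∀ π : P, c s.2.1 π = 0) ∧
      (∀ ξ : X₁, a s.1 ξ + b₁ ξ s.2.1 = 0) ∧
      (∀ v : X₂t, (∀ π : P, c v π = 0) → b₁ s.1 v + b v s.2.2 = 0) ∧
      (∀ q : Q, b s.2.1 q = F q)) :
    -- the hybrid problem has a unique solution
    (∃! t : X₁ × X₂t × Q × P,
      (∀ ξ : X₁, a t.1 ξ + b₁ ξ t.2.1 = 0) ∧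
      (∀ τ : X₂t, b₁ t.1 τ + b τ t.2.2.1 = c τ t.2.2.2) ∧
      (∀ q : Q, b t.2.1 q = F q) ∧
      (∀ π : P, c t.2.1 π = 0)) ∧
    -- and its first three components coincide with the non-hybrid solution
    (∀ (θ θbar : X₁) (u ubar : X₂t) (p pbar : Q) (lam : P),
      ((∀ π : P, c u π = 0) ∧
       (∀ ξ : X₁, a θ ξ + b₁ ξ u = 0) ∧
       (∀ v : X₂t, (∀ π : P, c v π = 0) → b₁ θ v + b v p = 0) ∧
       (∀ q : Q, b u q = F q)) →
      ((∀ ξ : X₁, a θbar ξ + b₁ ξ ubar = 0) ∧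
       (∀ τ : X₂t, b₁ θbar τ + b τ pbar = c τ lam) ∧
       (∀ q : Q, b ubar q = F q) ∧
       (∀ π : P, c ubar π = 0)) →
      θbar = θ ∧ ubar = u ∧ pbar = p) := by
  obtain ⟨⟨θ, u, p⟩, hsol, huniq⟩ := hnonhybrid
  have restrict_eq : ∀ {θ' u' p' lam'}, IsHybridSolution a b₁ b c F θ' u' p' lam' →
      θ' = θ ∧ u' = u ∧ p' = p := fun {θ' u' p' _} h => by
    simpa only [Prod.mk_inj] using huniq (θ', u', p') h.isNonhybridSolution
  obtain ⟨lam, hlam⟩ := IsNonhybridSolution.exists_isHybridSolution hsol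
  refine ⟨⟨(θ, u, p, lam), hlam, ?_⟩, ?_⟩
  · rintro ⟨θ', u', p', lam'⟩ h
    obtain ⟨rfl, rfl, rfl⟩ := restrict_eq h
    rw [hlam.multiplier_unique hnondeg h]
  · intro θ₀ θbar u₀ ubar p₀ pbar lam' h₀ h
    obtain ⟨rfl, rfl, rfl⟩ := restrict_eq h
    simpa only [Prod.mk_inj, eq_comm] using huniq (θ₀, u₀, p₀) h₀

/-- **Equivalence between the expanded mixed method and its hybridization.**
Let `X₁, X₂t, Q, P` be finite-dimensional real vector spaces, `a, b₁, b, c`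
bilinear forms and `F` a linear functional on `Q`.  Assume `c` is
nondegenerate in its second variable and define
`X₂ := {v ∈ X₂t : c v π = 0 for all π}`.  If the non-hybrid problem has a
unique solution `(θ, u, p)` with `u ∈ X₂`, then the hybrid problem has a
unique solution `(θ̄, ū, p̄, λ)` and moreover `(θ̄, ū, p̄) = (θ, u, p)`. -/
theorem hybridization_equivalence
    {X₁ X₂t Q P : Type*}
    [AddCommGroup X₁] [Module ℝ X₁] [FiniteDimensional ℝ X₁]
    [AddCommGroup X₂t] [Module ℝ X₂t] [FiniteDimensional ℝ X₂t]
    [AddCommGroup Q] [Module ℝ Q] [FiniteDimensional ℝ Q]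
    [AddCommGroup P] [Module ℝ P] [FiniteDimensional ℝ P]
    (a : X₁ →ₗ[ℝ] X₁ →ₗ[ℝ] ℝ)
    (b₁ : X₁ →ₗ[ℝ] X₂t →ₗ[ℝ] ℝ)
    (b : X₂t →ₗ[ℝ] Q →ₗ[ℝ] ℝ)
    (c : X₂t →ₗ[ℝ] P →ₗ[ℝ] ℝ)
    (F : Q →ₗ[ℝ] ℝ)
    (hnondeg : ∀ π : P, (∀ τ : X₂t, c τ π = 0) → π = 0)
    -- the non-hybrid problem has a unique solution (with velocity in
    -- X₂ := {v : X₂t | ∀ π, c v π = 0})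
    (hnonhybrid : ∃! s : X₁ × X₂t × Q,
      (∀ π : P, c s.2.1 π = 0) ∧
      (∀ ξ : X₁, a s.1 ξ + b₁ ξ s.2.1 = 0) ∧
      (∀ v : X₂t, (∀ π : P, c v π = 0) → b₁ s.1 v + b v s.2.2 = 0) ∧
      (∀ q : Q, b s.2.1 q = F q)) :
    -- the hybrid problem has a unique solution
    (∃! t : X₁ × X₂t × Q × P,
      (∀ ξ : X₁, a t.1 ξ + b₁ ξ t.2.1 = 0) ∧
      (∀ τ : X₂t, b₁ t.1 τ + b τ t.2.2.1 = c τ t.2.2.2) ∧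
      (∀ q : Q, b t.2.1 q = F q) ∧
      (∀ π : P, c t.2.1 π = 0)) ∧
    -- and its first three components coincide with the non-hybrid solution
    (∀ (θ θbar : X₁) (u ubar : X₂t) (p pbar : Q) (lam : P),
      ((∀ π : P, c u π = 0) ∧
       (∀ ξ : X₁, a θ ξ + b₁ ξ u = 0) ∧
       (∀ v : X₂t, (∀ π : P, c v π = 0) → b₁ θ v + b v p = 0) ∧
       (∀ q : Q, b u q = F q)) →
      ((∀ ξ : X₁, a θbar ξ + b₁ ξ ubar = 0) ∧
       (∀ τ : X₂t, b₁ θbar τ + b τ pbar = c τ lam) ∧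
       (∀ q : Q, b ubar q = F q) ∧
       (∀ π : P, c ubar π = 0)) →
      θbar = θ ∧ ubar = u ∧ pbar = p) :=
  hybridization_equivalence_general a b₁ b c F hnondeg hnonhybrid
end
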